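/- arXiv:1112.1436 — 7 statements merged into one kernel-verified Lean document; each statement's English description precedes it below -/
import Mathlib

section
/- The conic system P = {x : Ax ≤_K b} is well-behaved if and only if the set {(A*y, ⟨b, y⟩ + s) : y ∈ K*, s ∈ ℝ, s ≥ 0} ⊆ X × ℝ is closed. -/
open scoped RealInnerProductSpace

/-!
Weak duality puts the augmented dual set `Q = {(A* y, ⟪b, y⟫ + s)}` inside the epigraph `E` of
the support function of `P`, and `P` is well-behaved exactly when `E ⊆ Q`. Since `E` is closed,
`E ⊆ Q` makes `Q = E` closed. Conversely `E ⊆ closure Q` by Farkas' lemma: a functional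
`(x', r)` that is nonnegative on `Q` has `r ≥ 0` and `A x' + r b ∈ K** = K`, so either
`-x'/r ∈ P` (if `r > 0`) or `-x'` is a recession direction of `P` (if `r = 0`); in both cases the
functional is nonnegative on `E`.
-/

noncomputable section

/-- The dual cone of a set `K` in a real inner product space. -/
def dualConeSet {Y : Type*} [NormedAddCommGroup Y] [InnerProductSpace ℝ Y] (K : Set Y) : Set Y :=
  {y | ∀ x ∈ K, 0 ≤ ⟪y, x⟫}

/-- The conic system `P = {x | Ax ≤_K b}` is well-behaved: for every objective `c` for which
the value of `sup {⟪c, x⟫ | b - A x ∈ K}` is finite (i.e. the set of objective values has a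
least upper bound `v`), there is `y ∈ K*` with `A* y = c` and `⟪b, y⟫ = v`. -/
def WellBehavedSystem {X Y : Type*}
    [NormedAddCommGroup X] [InnerProductSpace ℝ X] [FiniteDimensional ℝ X]
    [NormedAddCommGroup Y] [InnerProductSpace ℝ Y] [FiniteDimensional ℝ Y]
    (A : X →ₗ[ℝ] Y) (b : Y) (K : Set Y) : Prop :=
  ∀ (c : X) (v : ℝ), IsLUB {r : ℝ | ∃ x : X, b - A x ∈ K ∧ r = ⟪c, x⟫} v →
    ∃ y ∈ dualConeSet K, LinearMap.adjoint A y = c ∧ ⟪b, y⟫ = v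

section Cones

variable {Y : Type*}

def ProperCone.ofIsClosed [AddCommGroup Y] [Module ℝ Y] [TopologicalSpace Y] {K : Set Y}
    (hKclosed : IsClosed K) (hKconv : Convex ℝ K)
    (hKcone : ∀ t : ℝ, 0 ≤ t → ∀ x ∈ K, t • x ∈ K) (hne : K.Nonempty) : ProperCone ℝ Y where
  carrier := K
  zero_mem' := by
    obtain ⟨x, hx⟩ := hne
    simpa using hKcone 0 le_rfl x hx
  add_mem' {x z} hx hz := by
    have hmid := hKconv hx hz (by norm_num : (0 : ℝ) ≤ 1 / 2) (by norm_num : (0 : ℝ) ≤ 1 / 2)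
      (by norm_num)
    convert hKcone 2 zero_le_two _ hmid using 1
    module
  smul_mem' c x hx := hKcone c c.2 x hx
  isClosed' := hKclosed

variable [NormedAddCommGroup Y] [InnerProductSpace ℝ Y] [CompleteSpace Y]

lemma dualConeSet_eq_innerDual (K : Set Y) : dualConeSet K = ProperCone.innerDual K := by
  ext y
  simp [dualConeSet, real_inner_comm]

lemma ProperCone.mem_of_forall_dualConeSet_inner_nonneg (K : ProperCone ℝ Y) {w : Y}
    (hw : ∀ y ∈ dualConeSet K, 0 ≤ ⟪y, w⟫) : w ∈ K := by
  rw [← K.innerDual_innerDual, ← dualConeSet_eq_innerDual]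
  exact hw

end Cones

section SupportEpigraph

variable {X Y : Type*} [NormedAddCommGroup X] [InnerProductSpace ℝ X]
  [AddCommGroup Y] [Module ℝ Y] {A : X →ₗ[ℝ] Y} {b : Y}

variable (A b) in
def supportEpigraph (K : Set Y) : Set (X × ℝ) :=
  {p | ∀ x, b - A x ∈ K → ⟪p.1, x⟫ ≤ p.2}

variable (A b) in
lemma isClosed_supportEpigraph (K : Set Y) : IsClosed (supportEpigraph A b K) := by
  simp only [supportEpigraph, Set.ofPred_forall]
  exact isClosed_iInter fun x => isClosed_iInter fun _ =>
    isClosed_le (continuous_fst.inner continuous_const) continuous_snd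

variable {K : PointedCone ℝ Y}

lemma inner_nonneg_of_mem_supportEpigraph (hP : ∃ x, b - A x ∈ K) {x' : X} (hx' : A x' ∈ K)
    {p : X × ℝ} (hp : p ∈ supportEpigraph A b K) : 0 ≤ ⟪x', p.1⟫ := by
  obtain ⟨x₀, hx₀⟩ := hP
  rw [real_inner_comm]
  by_contra! hneg
  -- `x₀ - t • x'` stays feasible for `t ≥ 0`; this `t` pushes its value above `p.2`
  set t := (p.2 - ⟪p.1, x₀⟫ + 1) / -⟪p.1, x'⟫ with ht_def
  have ht : 0 ≤ t := div_nonneg (by linarith [hp x₀ hx₀]) (by linarith)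
  have hfeas : b - A (x₀ - t • x') ∈ K := by
    have hsplit : b - A (x₀ - t • x') = (b - A x₀) + t • A x' := by
      rw [map_sub, map_smul]
      abel
    rw [hsplit]
    exact K.add_mem hx₀ (K.smul_mem ht hx')
  have htγ : t * ⟪p.1, x'⟫ = -(p.2 - ⟪p.1, x₀⟫ + 1) := by
    rw [ht_def]
    field_simp [hneg.ne]
  have hval := hp _ hfeas
  rw [inner_sub_right, real_inner_smul_right] at hval
  linarith

lemma inner_add_mul_nonneg_of_mem_supportEpigraph (hP : ∃ x, b - A x ∈ K) {x' : X} {r : ℝ}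
    (hr : 0 ≤ r) (hK : A x' + r • b ∈ K) {p : X × ℝ} (hp : p ∈ supportEpigraph A b K) :
    0 ≤ ⟪x', p.1⟫ + r * p.2 := by
  rcases hr.eq_or_lt with rfl | hr_pos
  · simpa using inner_nonneg_of_mem_supportEpigraph hP (by simpa using hK) hp
  have hfeas : b - A (-r⁻¹ • x') ∈ K := by
    convert K.smul_mem (inv_nonneg.2 hr_pos.le) hK using 1
    rw [map_smul, smul_add, smul_smul, inv_mul_cancel₀ hr_pos.ne', one_smul]
    module
  have hval := hp _ hfeas
  rw [real_inner_smul_right, real_inner_comm] at hval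
  have hscaled := mul_le_mul_of_nonneg_left hval hr_pos.le
  field_simp at hscaled
  linarith

end SupportEpigraph

section AugmentedCone

variable {X Y : Type*}
  [NormedAddCommGroup X] [InnerProductSpace ℝ X] [FiniteDimensional ℝ X]
  [NormedAddCommGroup Y] [InnerProductSpace ℝ Y] [FiniteDimensional ℝ Y]
  {A : X →ₗ[ℝ] Y} {b : Y}

variable (A b) in
def augCone (K : Set Y) : PointedCone ℝ (X × ℝ) where
  carrier := {p | ∃ y ∈ dualConeSet K, ∃ s : ℝ, 0 ≤ s ∧
    p = (LinearMap.adjoint A y, ⟪b, y⟫ + s)}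
  zero_mem' := ⟨0, by simp [dualConeSet_eq_innerDual], 0, le_rfl, by ext <;> simp⟩
  add_mem' := by
    rintro _ _ ⟨y, hy, s, hs, rfl⟩ ⟨z, hz, t, ht, rfl⟩
    rw [dualConeSet_eq_innerDual] at hy hz ⊢
    refine ⟨y + z, add_mem hy hz, s + t, add_nonneg hs ht, ?_⟩
    simp only [map_add, inner_add_right, Prod.mk_add_mk]
    ring_nf
  smul_mem' := by
    rintro ⟨c, hc⟩ _ ⟨y, hy, s, hs, rfl⟩
    rw [dualConeSet_eq_innerDual] at hy ⊢
    refine ⟨c • y, (ProperCone.innerDual _).smul_mem hy hc, c * s, mul_nonneg hc hs, ?_⟩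
    simp only [map_smul, real_inner_smul_right, Nonneg.mk_smul, Prod.smul_mk, smul_eq_mul]
    ring_nf

variable (A b) in
lemma augCone_subset_supportEpigraph (K : Set Y) :
    (augCone A b K : Set (X × ℝ)) ⊆ supportEpigraph A b K := by
  rintro _ ⟨y, hy, s, hs, rfl⟩ x hx
  have hdual : 0 ≤ ⟪y, b - A x⟫ := hy _ hx
  rw [inner_sub_right] at hdual
  dsimp only
  rw [LinearMap.adjoint_inner_left]
  linarith [real_inner_comm y b]

lemma wellBehaved_iff_supportEpigraph_subset {K : Set Y} (hP : ∃ x, b - A x ∈ K) :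
    WellBehavedSystem A b K ↔ supportEpigraph A b K ⊆ augCone A b K := by
  constructor
  · rintro hWB ⟨c, v⟩ hcv
    set S := {r : ℝ | ∃ x : X, b - A x ∈ K ∧ r = ⟪c, x⟫}
    have hS : S.Nonempty := hP.elim fun x hx => ⟨_, x, hx, rfl⟩
    have hSv : v ∈ upperBounds S := by
      rintro _ ⟨x, hx, rfl⟩
      exact hcv x hx
    obtain ⟨y, hy, hAy, hby⟩ := hWB c (sSup S) (isLUB_csSup hS ⟨v, hSv⟩)
    refine ⟨y, hy, v - sSup S, sub_nonneg.2 (csSup_le hS hSv), ?_⟩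
    rw [hAy, hby, add_sub_cancel]
  · intro hsub c v hlub
    obtain ⟨y, hy, s, hs, hcv⟩ := hsub (show (c, v) ∈ supportEpigraph A b K from
      fun x hx => hlub.1 ⟨x, hx, rfl⟩)
    obtain ⟨rfl, rfl⟩ := Prod.ext_iff.1 hcv
    have hby : ⟪b, y⟫ ∈ upperBounds {r : ℝ | ∃ x : X, b - A x ∈ K ∧
        r = ⟪LinearMap.adjoint A y, x⟫} := by
      rintro _ ⟨x, hx, rfl⟩
      simpa using augCone_subset_supportEpigraph A b K ⟨y, hy, 0, le_rfl, rfl⟩ x hx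
    exact ⟨y, hy, rfl, le_antisymm (by linarith) (hlub.2 hby)⟩

variable {K : ProperCone ℝ Y}

lemma apply_nonneg_of_mem_supportEpigraph (hP : ∃ x, b - A x ∈ K)
    (f : StrongDual ℝ (X × ℝ)) (hf : ∀ q ∈ augCone A b K, 0 ≤ f q)
    {p : X × ℝ} (hp : p ∈ supportEpigraph A b K) :
    0 ≤ f p := by
  set x' := (InnerProductSpace.toDual ℝ X).symm (f.comp (.inl ℝ X ℝ))
  set r := f (0, 1)
  have hf_eq (q : X × ℝ) : f q = ⟪x', q.1⟫ + r * q.2 := by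
    have hq : q = (q.1, 0) + q.2 • ((0 : X), (1 : ℝ)) := by simp
    rw [hq, map_add, map_smul, InnerProductSpace.toDual_symm_apply]
    simp [mul_comm, r]
  have hr : 0 ≤ r :=
    hf (0, 1) ⟨0, by simp [dualConeSet_eq_innerDual], 1, zero_le_one, by simp⟩
  have hK : A x' + r • b ∈ K := by
    refine K.mem_of_forall_dualConeSet_inner_nonneg fun y hy => ?_
    have hfy := hf _ ⟨y, hy, 0, le_rfl, rfl⟩
    rw [hf_eq, add_zero] at hfy
    dsimp only at hfy
    rw [LinearMap.adjoint_inner_right] at hfy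
    rwa [real_inner_comm, inner_add_left, real_inner_smul_left]
  rw [hf_eq]
  exact inner_add_mul_nonneg_of_mem_supportEpigraph hP hr hK hp

lemma supportEpigraph_subset_closure_augCone (hP : ∃ x, b - A x ∈ K) :
    supportEpigraph A b K ⊆ closure (augCone A b K) := by
  intro p hp
  by_contra hp'
  let C : ProperCone ℝ (X × ℝ) :=
    { toSubmodule := (augCone A b K).closure, isClosed' := isClosed_closure }
  obtain ⟨f, hfC, hfp⟩ := C.hyperplane_separation_point (x₀ := p) hp'
  exact hfp.not_ge <|
    apply_nonneg_of_mem_supportEpigraph hP f (fun q hq => hfC q (subset_closure hq)) hp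

theorem wellBehaved_iff_isClosed_augCone (hP : ∃ x, b - A x ∈ K) :
    WellBehavedSystem A b K ↔ IsClosed (augCone A b K : Set (X × ℝ)) := by
  rw [wellBehaved_iff_supportEpigraph_subset hP]
  constructor
  · intro h
    rw [(augCone_subset_supportEpigraph A b K).antisymm h]
    exact isClosed_supportEpigraph A b K
  · exact fun h => (supportEpigraph_subset_closure_augCone hP).trans h.closure_subset

end AugmentedCone

/-- `P` is well-behaved iff the set
`{(A*y, ⟨b,y⟩ + s) : y ∈ K*, s ≥ 0} ⊆ X × ℝ` is closed. -/
theorem wellBehaved_iff_closed_aug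
    {X Y : Type*}
    [NormedAddCommGroup X] [InnerProductSpace ℝ X] [FiniteDimensional ℝ X]
    [NormedAddCommGroup Y] [InnerProductSpace ℝ Y] [FiniteDimensional ℝ Y]
    (A : X →ₗ[ℝ] Y) (b : Y) (K : Set Y)
    (hKclosed : IsClosed K) (hKconv : Convex ℝ K)
    (hKcone : ∀ (t : ℝ), 0 ≤ t → ∀ x ∈ K, t • x ∈ K)
    (hP : ∃ x : X, b - A x ∈ K) :
    WellBehavedSystem A b K ↔
      IsClosed {p : X × ℝ | ∃ y ∈ dualConeSet K, ∃ s : ℝ, 0 ≤ s ∧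
        p = (LinearMap.adjoint A y, ⟪b, y⟫ + s)} :=
  have hne : K.Nonempty := hP.elim fun _ hx => ⟨_, hx⟩
  wellBehaved_iff_isClosed_augCone (K := ProperCone.ofIsClosed hKclosed hKconv hKcone hne) hP
end
end

section
/- Let z be a maximum slack of the conic system P. If the set {(A*y, ⟨b, y⟩ + s) : y ∈ K*, s ∈ ℝ, s ≥ 0} ⊆ X × ℝ is closed, then R(A, b) ∩ (cl dir(z, K) \ dir(z, K)) = ∅. -/
open scoped RealInnerProductSpace

noncomputable section

/-- The set of feasible directions at `x` in the convex set `C`. -/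
def dirSet {Y : Type*} [NormedAddCommGroup Y] [InnerProductSpace ℝ Y]
    (x : Y) (C : Set Y) : Set Y :=
  {v | ∃ ε : ℝ, 0 < ε ∧ x + ε • v ∈ C}

/-- If `z` is in the intrinsic interior of `C` and `v` is in the vector span of `C`,
then some small positive multiple of `v` is a feasible direction at `z`. -/
lemma exists_pos_mem_of_intrinsicInterior {Y : Type*} [NormedAddCommGroup Y] [NormedSpace ℝ Y]
    {C : Set Y} {z v : Y} (hz : z ∈ intrinsicInterior ℝ C) (hv : v ∈ vectorSpan ℝ C) :
    ∃ ε : ℝ, 0 < ε ∧ z + ε • v ∈ C := by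
  obtain ⟨z', hz', hzeq⟩ := hz
  have hzC : z ∈ affineSpan ℝ C := hzeq ▸ z'.2
  have hmem : ∀ ε : ℝ, z + ε • v ∈ affineSpan ℝ C := by
    intro ε
    have h1 : (ε • v) +ᵥ z ∈ affineSpan ℝ C :=
      AffineSubspace.vadd_mem_of_mem_direction
        (by rw [direction_affineSpan]; exact Submodule.smul_mem _ _ hv) hzC
    simpa [vadd_eq_add, add_comm] using h1
  set γ : ℝ → affineSpan ℝ C := fun ε => ⟨z + ε • v, hmem ε⟩ with hγ
  have hcont : Continuous γ := by
    apply Continuous.subtype_mk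
    continuity
  have h0 : γ 0 ∈ interior (((↑) : affineSpan ℝ C → Y) ⁻¹' C) := by
    have h00 : γ 0 = z' := by
      apply Subtype.ext
      simp [hγ, ← hzeq]
    rw [h00]; exact hz'
  have hnh : γ ⁻¹' (interior (((↑) : affineSpan ℝ C → Y) ⁻¹' C)) ∈ nhds (0 : ℝ) :=
    hcont.continuousAt.preimage_mem_nhds (isOpen_interior.mem_nhds h0)
  obtain ⟨δ, hδ, hball⟩ := Metric.mem_nhds_iff.mp hnh
  refine ⟨δ / 2, by positivity, ?_⟩
  have hin : γ (δ / 2) ∈ interior (((↑) : affineSpan ℝ C → Y) ⁻¹' C) := by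
    apply hball
    rw [Metric.mem_ball, Real.dist_eq]
    rw [sub_zero, abs_of_pos (by positivity)]
    linarith
  have h2 : γ (δ / 2) ∈ (((↑) : affineSpan ℝ C → Y) ⁻¹' C) := interior_subset hin
  exact h2

/-- Hand-rolled bipolar fact: if `⟪y, m⟫ ≤ 0` for all `y` in the dual cone, then `-m ∈ K`. -/
lemma neg_mem_of_dual_nonpos {Y : Type*} [NormedAddCommGroup Y] [InnerProductSpace ℝ Y]
    [FiniteDimensional ℝ Y] {K : Set Y} (hKclosed : IsClosed K) (hKconv : Convex ℝ K)
    (hKcone : ∀ (t : ℝ), 0 ≤ t → ∀ x ∈ K, t • x ∈ K) (hne : K.Nonempty)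
    {m : Y} (hm : ∀ y ∈ dualConeSet K, ⟪y, m⟫ ≤ 0) : -m ∈ K := by
  by_contra hmem
  obtain ⟨f, u, hfK, hfm⟩ := geometric_hahn_banach_closed_point hKconv hKclosed hmem
  have h0K : (0 : Y) ∈ K := by
    obtain ⟨k, hk⟩ := hne; simpa using hKcone 0 le_rfl k hk
  have hu : 0 < u := by simpa using hfK 0 h0K
  have hfneg : ∀ a ∈ K, f a ≤ 0 := by
    intro a ha
    by_contra h
    push_neg at h
    have h2 := hfK ((2 * u / f a) • a) (hKcone _ (by positivity) a ha)
    rw [map_smul, smul_eq_mul, div_mul_cancel₀ _ h.ne'] at h2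
    linarith
  set y : Y := -(InnerProductSpace.toDual ℝ Y).symm f with hy
  have hyip : ∀ a : Y, ⟪y, a⟫ = -(f a) := by
    intro a
    rw [hy, inner_neg_left, InnerProductSpace.toDual_symm_apply]
  have hyK : y ∈ dualConeSet K := fun a ha => by rw [hyip]; linarith [hfneg a ha]
  have h3 := hm y hyK
  rw [hyip] at h3
  have h4 : u < f (-m) := hfm
  rw [map_neg] at h4
  linarith

/-- if `z` is a maximum slack of the conic system `P` and the set
`{(A*y, ⟨b,y⟩ + s) : y ∈ K*, s ≥ 0}` is closed, then
`R(A,b) ∩ (cl dir(z,K) \ dir(z,K)) = ∅`. -/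
theorem rangeAb_inter_frontier_dir_empty_of_closed
    {X Y : Type*}
    [NormedAddCommGroup X] [InnerProductSpace ℝ X] [FiniteDimensional ℝ X]
    [NormedAddCommGroup Y] [InnerProductSpace ℝ Y] [FiniteDimensional ℝ Y]
    (A : X →ₗ[ℝ] Y) (b : Y) (K : Set Y)
    (hKclosed : IsClosed K) (hKconv : Convex ℝ K)
    (hKcone : ∀ (t : ℝ), 0 ≤ t → ∀ x ∈ K, t • x ∈ K)
    (hP : ∃ x : X, b - A x ∈ K)
    (z : Y)
    (hz : z ∈ intrinsicInterior ℝ ({w : Y | ∃ x : X, w = A x + b} ∩ K))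
    (hclosed : IsClosed {p : X × ℝ | ∃ y ∈ dualConeSet K, ∃ s : ℝ, 0 ≤ s ∧
      p = (LinearMap.adjoint A y, ⟪b, y⟫ + s)}) :
    {w : Y | ∃ (x : X) (t : ℝ), w = A x + t • b} ∩
      (closure (dirSet z K) \ dirSet z K) = ∅ := by
  have hKne : K.Nonempty := by obtain ⟨x, hx⟩ := hP; exact ⟨_, hx⟩
  have h0K : (0 : Y) ∈ K := by
    obtain ⟨k, hk⟩ := hKne; simpa using hKcone 0 le_rfl k hk
  have hKadd : ∀ a ∈ K, ∀ c ∈ K, a + c ∈ K := by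
    intro a ha c hc
    have h2 := hKcone 2 (by norm_num) _
      (hKconv ha hc (by norm_num : (0:ℝ) ≤ 1/2) (by norm_num : (0:ℝ) ≤ 1/2) (by norm_num))
    have he : (2:ℝ) • ((1/2 : ℝ) • a + (1/2 : ℝ) • c) = a + c := by
      rw [smul_add, smul_smul, smul_smul]; norm_num
    rwa [he] at h2
  set C : Set Y := {w : Y | ∃ x : X, w = A x + b} ∩ K with hC
  have hzC : z ∈ C := intrinsicInterior_subset hz
  obtain ⟨⟨x₀, hx₀⟩, hzK⟩ := hzC
  have hzC' : z ∈ C := ⟨⟨x₀, hx₀⟩, hzK⟩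
  -- the generating cone G = image of the homogenized feasible cone
  set G : Set Y := {k : Y | (∃ u : X, ∃ τ : ℝ, 0 ≤ τ ∧ k = A u + τ • b) ∧ k ∈ K} with hG
  have hzG : z ∈ G := ⟨⟨x₀, 1, zero_le_one, by rw [one_smul]; exact hx₀⟩, hzK⟩
  -- Key lemma: from z one can move a little backwards along any element of G
  have key : ∀ k ∈ G, ∃ ε : ℝ, 0 < ε ∧ z - ε • k ∈ K := by
    rintro k ⟨⟨u, τ, hτ, rfl⟩, hkK⟩
    rcases eq_or_lt_of_le hτ with hτ0 | hτpos
    · -- τ = 0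
      have hkK' : A u ∈ K := by
        have : A u + τ • b = A u := by rw [← hτ0, zero_smul, add_zero]
        rwa [this] at hkK
      have hzk : z + A u ∈ C := by
        refine ⟨⟨x₀ + u, ?_⟩, hKadd _ hzK _ hkK'⟩
        rw [map_add, hx₀]; abel
      have hv : -(A u) ∈ vectorSpan ℝ C := by
        have := vsub_mem_vectorSpan ℝ hzC' hzk
        simpa [vsub_eq_sub] using this
      obtain ⟨ε, hε, hmem⟩ := exists_pos_mem_of_intrinsicInterior hz hv
      refine ⟨ε, hε, ?_⟩
      have he : z - ε • (A u + τ • b) = z + ε • (-(A u)) := by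
        rw [← hτ0, zero_smul, add_zero, smul_neg, sub_eq_add_neg]
      rw [he]
      exact hmem.2
    · -- τ > 0
      set c : Y := τ⁻¹ • (A u + τ • b) with hc
      have hcC : c ∈ C := by
        refine ⟨⟨τ⁻¹ • u, ?_⟩, hKcone τ⁻¹ (by positivity) _ hkK⟩
        rw [hc, map_smul, smul_add, smul_smul, inv_mul_cancel₀ hτpos.ne', one_smul]
      have hv : z - c ∈ vectorSpan ℝ C := by
        have := vsub_mem_vectorSpan ℝ hzC' hcC
        simpa [vsub_eq_sub] using this
      obtain ⟨δ, hδ, hmem⟩ := exists_pos_mem_of_intrinsicInterior hz hv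
      refine ⟨δ / (τ * (1 + δ)), by positivity, ?_⟩
      have h1δ : (1 : ℝ) + δ ≠ 0 := by positivity
      have hτne : τ ≠ 0 := hτpos.ne'
      have heq : z - (δ / (τ * (1 + δ))) • (A u + τ • b)
          = (1 + δ)⁻¹ • (z + δ • (z - c)) := by
        rw [hc]
        match_scalars
        all_goals field_simp
        all_goals ring_nf
        all_goals try tauto
      rw [heq]
      exact hKcone _ (by positivity) _ hmem.2
  -- main argument
  ext w
  simp only [Set.mem_empty_iff_false, iff_false]
  rintro ⟨⟨x, t, rfl⟩, hwcl, hwnot⟩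
  apply hwnot
  -- inner product expansion helper
  have hA : ∀ v : Y, ∀ q : X, ∀ r : ℝ,
      ⟪v, A q + r • b⟫ = ⟪LinearMap.adjoint A v, q⟫ + r * ⟪b, v⟫ := by
    intro v q r
    rw [inner_add_right, real_inner_smul_right, LinearMap.adjoint_inner_left,
      real_inner_comm v b]
  -- Lemma C: any functional vanishing on G is nonnegative on w
  have lemC : ∀ g : Y, (∀ k ∈ G, ⟪g, k⟫ = 0) → 0 ≤ ⟪g, A x + t • b⟫ := by
    intro g hg
    set D := {p : X × ℝ | ∃ y ∈ dualConeSet K, ∃ s : ℝ, 0 ≤ s ∧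
      p = (LinearMap.adjoint A y, ⟪b, y⟫ + s)} with hD
    have h0Kdual : (0 : Y) ∈ dualConeSet K := fun a _ => by
      rw [inner_zero_left]
    have hDmem : ((LinearMap.adjoint A) g, (⟪b, g⟫ : ℝ)) ∈ D := by
      by_contra hnot
      have hDconv : Convex ℝ D := by
        rintro p ⟨y1, hy1, s1, hs1, rfl⟩ q ⟨y2, hy2, s2, hs2, rfl⟩ a c ha hc hac
        refine ⟨a • y1 + c • y2, ?_, a * s1 + c * s2, by positivity, ?_⟩
        · intro k hk
          have := hy1 k hk
          have := hy2 k hk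
          rw [inner_add_left, real_inner_smul_left, real_inner_smul_left]
          nlinarith [hy1 k hk, hy2 k hk]
        · rw [Prod.smul_mk, Prod.smul_mk, Prod.mk_add_mk]
          refine Prod.ext ?_ ?_
          · simp [map_add, map_smul]
          · simp only [smul_eq_mul]
            rw [inner_add_right, real_inner_smul_right, real_inner_smul_right]
            ring
      obtain ⟨f, u, hfD, hfg⟩ := geometric_hahn_banach_closed_point hDconv hclosed hnot
      have h0D : (0 : X × ℝ) ∈ D := ⟨0, h0Kdual, 0, le_rfl, by
        refine Prod.ext ?_ ?_ <;> simp⟩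
      have hu : 0 < u := by simpa using hfD 0 h0D
      have hDcone : ∀ c : ℝ, 0 ≤ c → ∀ d ∈ D, c • d ∈ D := by
        rintro c hcpos d ⟨y, hy, s, hs, rfl⟩
        refine ⟨c • y, ?_, c * s, mul_nonneg hcpos hs, ?_⟩
        · intro k hk
          rw [real_inner_smul_left]
          exact mul_nonneg hcpos (hy k hk)
        · rw [Prod.smul_mk]
          refine Prod.ext ?_ ?_
          · simp [map_smul]
          · simp only [smul_eq_mul]
            rw [real_inner_smul_right]
            ring
      have hfnonpos : ∀ d ∈ D, f d ≤ 0 := by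
        intro d hd
        by_contra h
        push_neg at h
        have hscale : (2 * u / f d) • d ∈ D :=
          hDcone _ (div_nonneg (by linarith) h.le) d hd
        have h2 := hfD _ hscale
        rw [map_smul, smul_eq_mul, div_mul_cancel₀ _ h.ne'] at h2
        linarith
      set φ : X →L[ℝ] ℝ := f.comp (ContinuousLinearMap.inl ℝ X ℝ) with hφ
      set β : ℝ := f (0, 1) with hβ
      have hfsplit : ∀ a : X, ∀ r : ℝ, f (a, r) = φ a + r * β := by
        intro a r
        have he : ((a, r) : X × ℝ) = (a, 0) + r • ((0 : X), (1 : ℝ)) := by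
          refine Prod.ext ?_ ?_ <;> simp
        rw [he, map_add, map_smul, smul_eq_mul]
        rfl
      set v : X := (InnerProductSpace.toDual ℝ X).symm φ with hv
      have hvφ : ∀ a : X, ⟪v, a⟫ = φ a := fun a => InnerProductSpace.toDual_symm_apply
      have hβ0 : β ≤ 0 := by
        have h1 : f ((LinearMap.adjoint A) 0, ⟪b, (0 : Y)⟫ + 1) ≤ 0 :=
          hfnonpos _ ⟨0, h0Kdual, 1, zero_le_one, rfl⟩
        rw [hfsplit] at h1
        simp only [map_zero, inner_zero_right, zero_add, one_mul] at h1
        exact h1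
      have hKst : ∀ y ∈ dualConeSet K, ⟪y, A v + β • b⟫ ≤ 0 := by
        intro y hy
        have h1 : f ((LinearMap.adjoint A) y, ⟪b, y⟫ + 0) ≤ 0 :=
          hfnonpos _ ⟨y, hy, 0, le_rfl, rfl⟩
        rw [hfsplit] at h1
        have h2 : φ (LinearMap.adjoint A y) = ⟪y, A v⟫ := by
          rw [← hvφ, real_inner_comm, LinearMap.adjoint_inner_left]
        rw [h2] at h1
        rw [inner_add_right, real_inner_smul_right]
        rw [real_inner_comm y b] at h1
        linarith
      have hmK : -(A v + β • b) ∈ K :=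
        neg_mem_of_dual_nonpos hKclosed hKconv hKcone hKne hKst
      have hmG : -(A v + β • b) ∈ G := by
        refine ⟨⟨-v, -β, by linarith, ?_⟩, hmK⟩
        rw [map_neg, neg_smul, neg_add]
      have hfg' : f ((LinearMap.adjoint A) g, (⟪b, g⟫ : ℝ)) = ⟪g, A v + β • b⟫ := by
        rw [hfsplit, inner_add_right, real_inner_smul_right]
        have h2 : φ (LinearMap.adjoint A g) = ⟪g, A v⟫ := by
          rw [← hvφ, real_inner_comm, LinearMap.adjoint_inner_left]
        rw [h2, real_inner_comm g b]
        ring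
      have hggk := hg _ hmG
      rw [inner_neg_right] at hggk
      have : ⟪g, A v + β • b⟫ = 0 := by linarith
      rw [hfg', this] at hfg
      linarith
    obtain ⟨y, hyK, s, hs, hpe⟩ := hDmem
    have h1 : (LinearMap.adjoint A) g = (LinearMap.adjoint A) y := congrArg Prod.fst hpe
    have h2 : (⟪b, g⟫ : ℝ) = ⟪b, y⟫ + s := congrArg Prod.snd hpe
    have hgz : ⟪g, z⟫ = 0 := hg z hzG
    have hgz2 : ⟪g, z⟫ = ⟪y, z⟫ + s := by
      have hz1 : z = A x₀ + (1 : ℝ) • b := by rw [one_smul]; exact hx₀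
      rw [hz1, hA g x₀ 1, hA y x₀ 1, h1, h2]
      ring
    have hyz : ⟪y, z⟫ = 0 ∧ s = 0 := by
      have hyz0 : 0 ≤ ⟪y, z⟫ := hyK z hzK
      constructor <;> linarith
    have hyw : 0 ≤ ⟪y, A x + t • b⟫ := by
      have hsub : dirSet z K ⊆ {v : Y | 0 ≤ ⟪y, v⟫} := by
        rintro v ⟨ε, hε, hvK⟩
        have h3 : 0 ≤ ⟪y, z + ε • v⟫ := hyK _ hvK
        rw [inner_add_right, hyz.1, real_inner_smul_right, zero_add] at h3
        simp only [Set.mem_setOf_eq]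
        nlinarith
      have hcl : closure (dirSet z K) ⊆ {v : Y | 0 ≤ ⟪y, v⟫} :=
        closure_minimal hsub (isClosed_le continuous_const
          (continuous_const.inner continuous_id))
      exact hcl hwcl
    have heq : ⟪g, A x + t • b⟫ = ⟪y, A x + t • b⟫ := by
      rw [hA g x t, hA y x t, h1, h2, hyz.2]
      ring
    rw [heq]
    exact hyw
  -- orthogonality argument: w ∈ span G
  set V : Submodule ℝ Y := Submodule.span ℝ G with hV
  have hwV : A x + t • b ∈ V := by
    rw [← Submodule.orthogonal_orthogonal V, Submodule.mem_orthogonal]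
    intro g hg
    have hgeq : ∀ k ∈ G, ⟪g, k⟫ = 0 := fun k hk => by
      rw [real_inner_comm]
      exact (Submodule.mem_orthogonal V g).mp hg k (Submodule.subset_span hk)
    have h1 := lemC g hgeq
    have h2 := lemC (-g) (fun k hk => by rw [inner_neg_left, hgeq k hk, neg_zero])
    rw [inner_neg_left] at h2
    linarith
  -- G is an additive cone, so span G = G - G
  have hGadd : ∀ a ∈ G, ∀ c ∈ G, a + c ∈ G := by
    rintro a ⟨⟨u1, τ1, hτ1, rfl⟩, ha⟩ c ⟨⟨u2, τ2, hτ2, rfl⟩, hc⟩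
    refine ⟨⟨u1 + u2, τ1 + τ2, by positivity, ?_⟩, hKadd _ ha _ hc⟩
    rw [map_add, add_smul]; abel
  have hGsmul : ∀ r : ℝ, 0 ≤ r → ∀ a ∈ G, r • a ∈ G := by
    rintro r hr a ⟨⟨u1, τ1, hτ1, rfl⟩, ha⟩
    refine ⟨⟨r • u1, r * τ1, by positivity, ?_⟩, hKcone r hr _ ha⟩
    rw [map_smul, smul_add, smul_smul]
  have h0G : (0 : Y) ∈ G := ⟨⟨0, 0, le_rfl, by simp⟩, h0K⟩
  let M : Submodule ℝ Y :=
    { carrier := {a : Y | ∃ k₁ ∈ G, ∃ k₂ ∈ G, a = k₁ - k₂}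
      add_mem' := by
        rintro a c ⟨a1, ha1, a2, ha2, rfl⟩ ⟨c1, hc1, c2, hc2, rfl⟩
        exact ⟨a1 + c1, hGadd _ ha1 _ hc1, a2 + c2, hGadd _ ha2 _ hc2, by abel⟩
      zero_mem' := ⟨0, h0G, 0, h0G, by simp⟩
      smul_mem' := by
        rintro r a ⟨a1, ha1, a2, ha2, rfl⟩
        rcases le_total 0 r with hr | hr
        · exact ⟨r • a1, hGsmul r hr _ ha1, r • a2, hGsmul r hr _ ha2, by
            rw [smul_sub]⟩
        · refine ⟨(-r) • a2, hGsmul _ (by linarith) _ ha2,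
            (-r) • a1, hGsmul _ (by linarith) _ ha1, by module⟩ }
  have hVM : V ≤ M := Submodule.span_le.mpr (fun k hk => ⟨k, hk, 0, h0G, by simp⟩)
  obtain ⟨k₁, hk₁, k₂, hk₂, hweq⟩ := hVM hwV
  obtain ⟨ε, hε, hzk⟩ := key k₂ hk₂
  refine ⟨ε, hε, ?_⟩
  have he2 : z + ε • (A x + t • b) = (z - ε • k₂) + ε • k₁ := by
    rw [hweq]; module
  rw [he2]
  exact hKadd _ hzk _ (hKcone ε hε.le _ hk₁.2)
end
end

section
/- If there exists x ∈ X with b − Ax ∈ ri K (Slater's condition, where ri denotes relative interior), then the conic system P = {x : Ax ≤_K b} is well-behaved. -/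
open scoped RealInnerProductSpace

noncomputable section

/-!
Fix `c` with finite value `v` and separate `(0, v)` from the convex set
`C = {(b - A x - k + p, s) | k ∈ K, p ∈ N, s ≤ ⟪c, x⟫} ⊆ Y × ℝ`, where `N` is the orthogonal
complement of `vectorSpan K ⊔ range A`. Above `0` the set `C` only sees values of feasible points
(there `p` is forced to vanish), so `(0, v)` is not an interior point. The summand `N` makes `C`
full-dimensional, and the Slater point then puts some `(0, t)` with `t < v` in the interior of `C`.
Hence the separating functional is non-vertical; normalised, it gives `y` with
`⟪y, b - A x - k⟫ + ⟪c, x⟫ ≤ v` for all `x` and `k ∈ K`, and this Lagrangian bound forces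
`y ∈ K*`, `A* y = c` and, with weak duality, `⟪b, y⟫ = v`.
-/

open Set Filter Topology

theorem exists_strongDual_le_of_notMem_interior {E : Type*} [AddCommGroup E] [Module ℝ E]
    [TopologicalSpace E] [IsTopologicalAddGroup E] [ContinuousSMul ℝ E] {C : Set E}
    (hC : Convex ℝ C) {p q : E} (hq : q ∈ interior C) (hp : p ∉ interior C) :
    ∃ f : StrongDual ℝ E, (∀ z ∈ C, f z ≤ f p) ∧ f q < f p := by
  obtain ⟨f, hf⟩ := geometric_hahn_banach_open_point hC.interior isOpen_interior hp
  have hC_sub : C ⊆ closure (interior C) := by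
    rw [hC.closure_interior_eq_closure_of_nonempty_interior ⟨q, hq⟩]
    exact subset_closure
  refine ⟨f, fun z hz => ?_, hf q hq⟩
  exact closure_minimal (fun z hz => (hf z hz).le) (isClosed_le f.continuous continuous_const)
    (hC_sub hz)

theorem exists_inner_add_le_of_strongDual_le {Y : Type*} [NormedAddCommGroup Y]
    [InnerProductSpace ℝ Y] [CompleteSpace Y] {S : Set (Y × ℝ)} {f : StrongDual ℝ (Y × ℝ)}
    {t v : ℝ} (hf : ∀ q ∈ S, f q ≤ f (0, v)) (ht : f (0, t) < f (0, v)) (htv : t < v) :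
    ∃ y : Y, ∀ q ∈ S, ⟪y, q.1⟫ + q.2 ≤ v := by
  set γ := f (0, 1)
  have hsplit : ∀ q : Y × ℝ, f q = f (q.1, 0) + q.2 * γ := fun q => by
    conv_lhs => rw [show q = (q.1, 0) + q.2 • ((0 : Y), (1 : ℝ)) by ext <;> simp]
    rw [map_add, map_smul, smul_eq_mul]
  have hvert : ∀ r : ℝ, f (0, r) = r * γ := fun r => by
    rw [hsplit, Prod.mk_zero_zero, map_zero, zero_add]
  have hγ : 0 < γ := by
    rw [hvert, hvert] at ht
    nlinarith
  refine ⟨γ⁻¹ • (InnerProductSpace.toDual ℝ Y).symm (f.comp (.inl ℝ Y ℝ)), fun q hq => ?_⟩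
  have hq := hf q hq
  rw [hsplit q, hvert] at hq
  rw [real_inner_smul_left, InnerProductSpace.toDual_symm_apply, ContinuousLinearMap.comp_apply,
    ContinuousLinearMap.inl_apply, inv_mul_eq_div, div_add' _ _ _ hγ.ne', div_le_iff₀ hγ]
  exact hq

theorem eventually_add_mem_of_mem_intrinsicInterior {E : Type*} [AddCommGroup E] [Module ℝ E]
    [TopologicalSpace E] [ContinuousAdd E] {K : Set E} {z : E}
    (hz : z ∈ intrinsicInterior ℝ K) : ∀ᶠ w : vectorSpan ℝ K in 𝓝 0, (w : E) + z ∈ K := by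
  obtain ⟨z, hz, rfl⟩ := hz
  let shift : vectorSpan ℝ K → affineSpan ℝ K := fun w =>
    ⟨w +ᵥ (z : E), AffineSubspace.vadd_mem_of_mem_direction
      (by rw [direction_affineSpan]; exact w.2) z.2⟩
  have hshift : Continuous shift := (continuous_subtype_val.add continuous_const).subtype_mk _
  have hshift0 : shift 0 = z := by ext; simp [shift]
  exact hshift.continuousAt.preimage_mem_nhds (hshift0 ▸ mem_interior_iff_mem_nhds.mp hz)

section PerturbationSet

variable {X Y : Type*} [NormedAddCommGroup X] [InnerProductSpace ℝ X] [NormedAddCommGroup Y]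
  [InnerProductSpace ℝ Y] (A : X →ₗ[ℝ] Y) (b : Y) (K : Set Y) (c : X)

def perturbationSet (N : Submodule ℝ Y) : Set (Y × ℝ) :=
  {q | ∃ x, ∃ k ∈ K, ∃ p ∈ N, q.1 = b - A x - k + p ∧ q.2 ≤ ⟪c, x⟫}

variable {A b K c}

theorem convex_perturbationSet (hK : Convex ℝ K) (N : Submodule ℝ Y) :
    Convex ℝ (perturbationSet A b K c N) := by
  rintro ⟨_, s⟩ ⟨x, k, hk, p, hp, rfl, hs⟩ ⟨_, s'⟩ ⟨x', k', hk', p', hp', rfl, hs'⟩ a a' ha ha' hab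
  refine ⟨a • x + a' • x', a • k + a' • k', hK hk hk' ha ha' hab, a • p + a' • p',
    N.add_mem (N.smul_mem a hp) (N.smul_mem a' hp'), ?_, ?_⟩
  · simp only [Prod.fst_add, Prod.smul_fst, map_add, map_smul]
    linear_combination (norm := module) hab • b
  · simp only [Prod.snd_add, Prod.smul_snd, smul_eq_mul, inner_add_right, real_inner_smul_right]
    gcongr

theorem exists_feasible_of_zero_mem_perturbationSet {x₀ : X} (hx₀ : b - A x₀ ∈ K) {t : ℝ}
    (ht : (0, t) ∈ perturbationSet A b K c (vectorSpan ℝ K ⊔ LinearMap.range A)ᗮ) :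
    ∃ x, b - A x ∈ K ∧ t ≤ ⟪c, x⟫ := by
  obtain ⟨x, k, hk, p, hp, h0, ht⟩ := ht
  set M := vectorSpan ℝ K ⊔ LinearMap.range A
  have hM : b - A x - k ∈ M := by
    have hsplit : b - A x - k = (b - A x₀ - k) + A (x₀ - x) := by rw [map_sub]; abel
    rw [hsplit]
    exact M.add_mem (Submodule.mem_sup_left (vsub_mem_vectorSpan ℝ hx₀ hk))
      (Submodule.mem_sup_right (LinearMap.mem_range_self A _))
  have hM' : b - A x - k ∈ Mᗮ := by
    rw [eq_neg_of_add_eq_zero_left h0.symm]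
    exact Mᗮ.neg_mem hp
  have hzero : b - A x - k = 0 := by
    simpa using (Submodule.mem_bot ℝ).mp (M.inf_orthogonal_eq_bot ▸ ⟨hM, hM'⟩)
  exact ⟨x, by rwa [sub_eq_zero.mp hzero], ht⟩

theorem zero_notMem_interior_perturbationSet {x₀ : X} (hx₀ : b - A x₀ ∈ K) {v : ℝ}
    (hv : v ∈ upperBounds {r | ∃ x, b - A x ∈ K ∧ r = ⟪c, x⟫}) :
    (0, v) ∉ interior (perturbationSet A b K c (vectorSpan ℝ K ⊔ LinearMap.range A)ᗮ) := by
  intro h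
  have hnhds : ∀ᶠ t in 𝓝[>] v, (0, t) ∈ perturbationSet A b K c _ :=
    nhdsWithin_le_nhds <| (Continuous.prodMk_right 0).continuousAt.preimage_mem_nhds
      (mem_interior_iff_mem_nhds.mp h)
  obtain ⟨t, ht, hvt⟩ := (hnhds.and self_mem_nhdsWithin).exists
  obtain ⟨x, hx, htx⟩ := exists_feasible_of_zero_mem_perturbationSet hx₀ ht
  exact (hv ⟨x, hx, rfl⟩).not_gt (hvt.trans_le htx)

theorem exists_zero_mem_interior_perturbationSet [FiniteDimensional ℝ X] [FiniteDimensional ℝ Y]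
    {x₀ : X} (hx₀ : b - A x₀ ∈ intrinsicInterior ℝ K) :
    ∃ t < ⟪c, x₀⟫,
      (0, t) ∈ interior (perturbationSet A b K c (vectorSpan ℝ K ⊔ LinearMap.range A)ᗮ) := by
  set V := vectorSpan ℝ K
  set N := (V ⊔ LinearMap.range A)ᗮ
  let Φ : V × X × N →ₗ[ℝ] Y := V.subtype.coprod (A.coprod N.subtype)
  have hΦ : Function.Surjective Φ := by
    rw [← LinearMap.range_eq_top, LinearMap.range_coprod, LinearMap.range_coprod,
      Submodule.range_subtype, Submodule.range_subtype, ← sup_assoc]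
    exact Submodule.sup_orthogonal_of_hasOrthogonalProjection
  set S := {q : V × X × N | ((-q.1 : V) : Y) + (b - A x₀) ∈ K ∧ ⟪c, q.2.1⟫ < 1}
  have hS : S ∈ 𝓝 0 := by
    refine Filter.Eventually.and ?_ ?_
    · exact (continuous_fst.neg.tendsto' 0 0 (by simp)).eventually
        (eventually_add_mem_of_mem_intrinsicInterior hx₀)
    · exact (continuous_const.inner (continuous_fst.comp continuous_snd)).tendsto 0
        |>.eventually (eventually_lt_nhds (by simp [Prod.fst_zero, Prod.snd_zero]))
  have hΦS : Φ '' S ∈ 𝓝 0 := by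
    simpa using (Φ.isOpenMap_of_finiteDimensional hΦ).image_mem_nhds hS
  refine ⟨⟪c, x₀⟫ - 2, by linarith, mem_interior_iff_mem_nhds.mpr ?_⟩
  have hIio : Iio (⟪c, x₀⟫ - 1) ∈ 𝓝 (⟪c, x₀⟫ - 2) := Iio_mem_nhds (by linarith)
  refine mem_of_superset (prod_mem_nhds hΦS hIio) ?_
  rintro ⟨_, s⟩ ⟨⟨⟨w, z, p⟩, ⟨hw, hz⟩, rfl⟩, hs⟩
  refine ⟨x₀ - z, _, hw, p, p.2, ?_, ?_⟩
  · simp only [Φ, LinearMap.coprod_apply, Submodule.subtype_apply, map_sub, NegMemClass.coe_neg]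
    abel
  · rw [inner_sub_right]
    linarith [mem_Iio.mp hs]

end PerturbationSet

theorem nonpos_of_forall_nonneg_mul_le {r B : ℝ} (h : ∀ t : ℝ, 0 ≤ t → t * r ≤ B) : r ≤ 0 := by
  by_contra! hr
  have h' := h ((|B| + 1) / r) (by positivity)
  rw [div_mul_cancel₀ _ hr.ne'] at h'
  linarith [le_abs_self B]

section Duality

variable {X Y : Type*} [NormedAddCommGroup X] [InnerProductSpace ℝ X] [FiniteDimensional ℝ X]
  [NormedAddCommGroup Y] [InnerProductSpace ℝ Y] [FiniteDimensional ℝ Y]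
  {A : X →ₗ[ℝ] Y} {b : Y} {K : Set Y}

theorem inner_adjoint_le_of_mem_dualConeSet {y : Y} (hy : y ∈ dualConeSet K) {x : X}
    (hx : b - A x ∈ K) : ⟪LinearMap.adjoint A y, x⟫ ≤ ⟪b, y⟫ := by
  have := hy _ hx
  rw [inner_sub_right, real_inner_comm] at this
  rw [LinearMap.adjoint_inner_left]
  linarith

theorem dual_optimal_of_lagrangian_le (hK0 : 0 ∈ K)
    (hKcone : ∀ t : ℝ, 0 ≤ t → ∀ k ∈ K, t • k ∈ K) {c : X} {v : ℝ}
    (hv : IsLUB {r | ∃ x, b - A x ∈ K ∧ r = ⟪c, x⟫} v) {y : Y}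
    (hL : ∀ x, ∀ k ∈ K, ⟪y, b - A x - k⟫ + ⟪c, x⟫ ≤ v) :
    y ∈ dualConeSet K ∧ LinearMap.adjoint A y = c ∧ ⟪b, y⟫ = v := by
  have hdual : y ∈ dualConeSet K := fun k hk => by
    refine neg_nonpos.mp (nonpos_of_forall_nonneg_mul_le (B := v - ⟪y, b⟫) fun t ht => ?_)
    have := hL 0 (t • k) (hKcone t ht k hk)
    simp only [map_zero, sub_zero, inner_sub_right, real_inner_smul_right, inner_zero_right] at this
    linarith
  have hadj : LinearMap.adjoint A y = c := by
    set w := c - LinearMap.adjoint A y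
    refine (sub_eq_zero.mp (real_inner_self_nonpos.mp
      (nonpos_of_forall_nonneg_mul_le (B := v - ⟪y, b⟫) fun t ht => ?_))).symm
    have := hL (t • w) 0 hK0
    rw [sub_zero, inner_sub_right, ← LinearMap.adjoint_inner_left] at this
    simp only [w, inner_sub_left, inner_smul_right] at this ⊢
    linarith
  refine ⟨hdual, hadj, le_antisymm ?_ (hv.2 ?_)⟩
  · simpa [real_inner_comm] using hL 0 0 hK0
  · rintro r ⟨x, hx, rfl⟩
    exact hadj ▸ inner_adjoint_le_of_mem_dualConeSet hdual hx

end Duality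

theorem wellBehaved_of_slater_general
    {X Y : Type*}
    [NormedAddCommGroup X] [InnerProductSpace ℝ X] [FiniteDimensional ℝ X]
    [NormedAddCommGroup Y] [InnerProductSpace ℝ Y] [FiniteDimensional ℝ Y]
    (A : X →ₗ[ℝ] Y) (b : Y) (K : Set Y)
    (hKconv : Convex ℝ K)
    (hKcone : ∀ (t : ℝ), 0 ≤ t → ∀ x ∈ K, t • x ∈ K)
    (hSlater : ∃ x : X, b - A x ∈ intrinsicInterior ℝ K) :
    WellBehavedSystem A b K := by
  obtain ⟨x₀, hx₀⟩ := hSlater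
  have hx₀K : b - A x₀ ∈ K := intrinsicInterior_subset hx₀
  have hK0 : (0 : Y) ∈ K := by simpa using hKcone 0 le_rfl _ hx₀K
  intro c v hv
  obtain ⟨t₀, ht₀, ht₀C⟩ := exists_zero_mem_interior_perturbationSet (c := c) hx₀
  obtain ⟨f, hfC, hft₀⟩ := exists_strongDual_le_of_notMem_interior
    (convex_perturbationSet hKconv _) ht₀C (zero_notMem_interior_perturbationSet hx₀K hv.1)
  obtain ⟨y, hy⟩ := exists_inner_add_le_of_strongDual_le hfC hft₀
    (ht₀.trans_le (hv.1 ⟨x₀, hx₀K, rfl⟩))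
  exact ⟨y, dual_optimal_of_lagrangian_le hK0 hKcone hv fun x k hk =>
    hy (b - A x - k, ⟪c, x⟫) ⟨x, k, hk, 0, Submodule.zero_mem _, (add_zero _).symm, le_rfl⟩⟩

/-- if Slater's condition holds, i.e. there is `x` with `b - A x` in the relative
interior of `K`, then the conic system `P = {x | Ax ≤_K b}` is well-behaved. -/
theorem wellBehaved_of_slater
    {X Y : Type*}
    [NormedAddCommGroup X] [InnerProductSpace ℝ X] [FiniteDimensional ℝ X]
    [NormedAddCommGroup Y] [InnerProductSpace ℝ Y] [FiniteDimensional ℝ Y]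
    (A : X →ₗ[ℝ] Y) (b : Y) (K : Set Y)
    (hKclosed : IsClosed K) (hKconv : Convex ℝ K)
    (hKcone : ∀ (t : ℝ), 0 ≤ t → ∀ x ∈ K, t • x ∈ K)
    (hSlater : ∃ x : X, b - A x ∈ intrinsicInterior ℝ K) :
    WellBehavedSystem A b K :=
  wellBehaved_of_slater_general A b K hKconv hKcone hSlater
end
end

section
/- Let C be a closed convex cone in a finite-dimensional real inner product space, let x ∈ C, and let E be the smallest face of C containing x. Then: dir(x, C) = C + lin E; ldir(x, C) = lin E; cl dir(x, C) = (E^△)*; and tan(x, C) = (E^△)^⊥, where lin denotes linear span, (E^△)* the dual cone of the conjugate face E^△, and (E^△)^⊥ the orthogonal complement of the span of E^△. -/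
open scoped RealInnerProductSpace Pointwise

noncomputable section

/-- The lineality space of the set of feasible directions at `x` in `C`. -/
def ldirSet {Y : Type*} [NormedAddCommGroup Y] [InnerProductSpace ℝ Y]
    (x : Y) (C : Set Y) : Set Y :=
  {v | v ∈ dirSet x C ∧ -v ∈ dirSet x C}

/-- The tangent space at `x` in `C`. -/
def tanSet {Y : Type*} [NormedAddCommGroup Y] [InnerProductSpace ℝ Y]
    (x : Y) (C : Set Y) : Set Y :=
  {v | v ∈ closure (dirSet x C) ∧ -v ∈ closure (dirSet x C)}

/-- `E` is a face of the cone `C`. -/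
def IsFaceOf {Y : Type*} [NormedAddCommGroup Y] [InnerProductSpace ℝ Y]
    (C E : Set Y) : Prop :=
  E ⊆ C ∧ Convex ℝ E ∧
    ∀ x₁ ∈ C, ∀ x₂ ∈ C, (1 / 2 : ℝ) • (x₁ + x₂) ∈ E → x₁ ∈ E ∧ x₂ ∈ E

/-- `E` is the smallest face of `C` containing `x`. -/
def IsSmallestFace {Y : Type*} [NormedAddCommGroup Y] [InnerProductSpace ℝ Y]
    (C E : Set Y) (x : Y) : Prop :=
  IsFaceOf C E ∧ x ∈ E ∧ ∀ E', IsFaceOf C E' → x ∈ E' → E ⊆ E'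

/-- The conjugate face `E^△ = C* ∩ E^⊥` of a face `E` of `C`. -/
def conjFace {Y : Type*} [NormedAddCommGroup Y] [InnerProductSpace ℝ Y]
    (C E : Set Y) : Set Y :=
  dualConeSet C ∩ {y | ∀ e ∈ E, ⟪y, e⟫ = 0}

/-! Since `C` is a convex cone and `x ∈ C`, the feasible directions at `x` form the convex cone
`dir(x, C) = C + ℝ x`. The smallest face containing `x` is `E = C ∩ -dir(x, C)`: this set is a
face containing `x`, and each of its points `y` writes `x` as a positive combination of `y` and a
point of `C`. Hence `lin E` is the lineality space of `dir(x, C)` and `dir(x, C) = C + lin E`.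
The dual cone of `C + lin E` is `C* ∩ E^⊥ = E^△`, so the bipolar theorem gives
`cl dir(x, C) = (E^△)*`, whose lineality space is `(E^△)^⊥`. -/

section

variable {Y : Type*} [NormedAddCommGroup Y] [InnerProductSpace ℝ Y]

theorem exists_pointedCone_coe_eq {C : Set Y} (hconv : Convex ℝ C)
    (hcone : ∀ t : ℝ, 0 ≤ t → ∀ y ∈ C, t • y ∈ C) (hne : C.Nonempty) :
    ∃ K : PointedCone ℝ Y, (K : Set Y) = C := by
  obtain ⟨x, hx⟩ := hne
  refine ⟨{ carrier := C, zero_mem' := ?_, add_mem' := ?_, smul_mem' := ?_ }, rfl⟩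
  · intro a b ha hb
    convert hcone 2 zero_le_two _ (hconv ha hb (half_pos one_pos).le (half_pos one_pos).le
      (add_halves 1)) using 1
    module
  · simpa using hcone 0 le_rfl x hx
  · rintro ⟨t, ht⟩ y hy
    exact hcone t ht y hy

def PointedCone.dirCone (K : PointedCone ℝ Y) (x : Y) : PointedCone ℝ Y :=
  K ⊔ ofSubmodule (ℝ ∙ x)

variable {K : PointedCone ℝ Y} {x : Y} {E : Set Y}

theorem PointedCone.mem_dirCone {v : Y} :
    v ∈ K.dirCone x ↔ ∃ c ∈ K, ∃ t : ℝ, c + t • x = v := by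
  simp only [dirCone, Submodule.mem_sup, Submodule.restrictScalars_mem,
    Submodule.mem_span_singleton, exists_exists_eq_and]

theorem PointedCone.span_singleton_le_lineal_dirCone : ℝ ∙ x ≤ (K.dirCone x).lineal :=
  gc_ofSubmodule_lineal.le_u le_sup_right

theorem PointedCone.dirSet_eq_dirCone (hx : x ∈ K) : dirSet x K = K.dirCone x := by
  ext v
  rw [SetLike.mem_coe, mem_dirCone]
  constructor
  · rintro ⟨ε, hε, hv⟩
    refine ⟨ε⁻¹ • (x + ε • v), K.smul_mem (inv_nonneg.2 hε.le) hv, -ε⁻¹, ?_⟩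
    rw [smul_add, smul_smul, inv_mul_cancel₀ hε.ne']
    module
  · rintro ⟨c, hc, t, rfl⟩
    have ht : 0 < 1 + |t| := by positivity
    refine ⟨(1 + |t|)⁻¹, inv_pos.2 ht, ?_⟩
    have hcoef : 0 ≤ 1 + (1 + |t|)⁻¹ * t := by
      rw [show 1 + (1 + |t|)⁻¹ * t = (1 + |t| + t) / (1 + |t|) by field_simp]
      exact div_nonneg (by linarith [neg_abs_le t]) ht.le
    rw [SetLike.mem_coe]
    convert K.add_mem (K.smul_mem (inv_pos.2 ht).le hc) (K.smul_mem hcoef hx) using 1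
    module

theorem isFaceOf_inter_neg_dirCone : IsFaceOf (K : Set Y) (K ∩ -(K.dirCone x : Set Y)) := by
  refine ⟨Set.inter_subset_left, K.convex.inter (K.dirCone x).convex.neg, ?_⟩
  rintro y₁ hy₁ y₂ hy₂ ⟨-, hy⟩
  rw [Set.mem_neg, SetLike.mem_coe] at hy
  have hsum : -(y₁ + y₂) ∈ K.dirCone x := by
    convert (K.dirCone x).smul_mem zero_le_two hy using 1
    module
  have hle : K ≤ K.dirCone x := le_sup_left
  refine ⟨⟨hy₁, ?_⟩, ⟨hy₂, ?_⟩⟩ <;> rw [Set.mem_neg, SetLike.mem_coe]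
  · convert add_mem hsum (hle hy₂) using 1
    abel
  · convert add_mem hsum (hle hy₁) using 1
    abel

theorem IsFaceOf.smul_mem (hE : IsFaceOf (K : Set Y) E) {e : Y} (he : e ∈ E)
    {t : ℝ} (ht : 0 ≤ t) : t • e ∈ E := by
  obtain ⟨n, hn⟩ := pow_unbounded_of_one_lt t one_lt_two
  induction n generalizing t with
  | zero =>
    refine (hE.2.2 _ (K.smul_mem ht (hE.1 he)) ((2 - t) • e) ?_ ?_).1
    · exact K.smul_mem (by rw [pow_zero] at hn; linarith) (hE.1 he)
    · convert he using 1
      module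
  | succ n ih =>
    refine (hE.2.2 _ (K.smul_mem ht (hE.1 he)) 0 K.zero_mem ?_).1
    convert ih (t := t / 2) (by positivity) (by rw [pow_succ] at hn; linarith)
      using 1
    module

theorem IsFaceOf.mem_of_smul_add_mem (hE : IsFaceOf (K : Set Y) E) {y z : Y}
    (hy : y ∈ K) (hz : z ∈ K) {a : ℝ} (ha : 0 < a) (h : a • y + z ∈ E) : y ∈ E := by
  have h2ay : (2 * a) • y ∈ E := by
    refine (hE.2.2 _ (K.smul_mem (by positivity) hy) ((2 : ℝ) • z)
      (K.smul_mem zero_le_two hz) ?_).1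
    convert h using 1
    module
  convert hE.smul_mem h2ay (inv_nonneg.2 (by positivity : (0 : ℝ) ≤ 2 * a)) using 1
  rw [smul_smul, inv_mul_cancel₀ (by positivity), one_smul]

theorem IsSmallestFace.eq_inter_neg_dirCone (hE : IsSmallestFace (K : Set Y) E x) :
    E = (K : Set Y) ∩ -(K.dirCone x : Set Y) := by
  have hx : x ∈ K := hE.1.1 hE.2.1
  refine Set.Subset.antisymm (hE.2.2 _ isFaceOf_inter_neg_dirCone ⟨hx, ?_⟩) ?_
  · rw [Set.mem_neg, SetLike.mem_coe, PointedCone.mem_dirCone]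
    exact ⟨0, K.zero_mem, -1, by module⟩
  · rintro y ⟨hy, hny⟩
    rw [Set.mem_neg, SetLike.mem_coe, PointedCone.mem_dirCone] at hny
    obtain ⟨c, hc, t, hct⟩ := hny
    obtain rfl : y = -(c + t • x) := neg_eq_iff_eq_neg.1 hct.symm
    -- `y + (c + (1 + |t|) • x) = (1 + |t| - t) • x` writes `x` as a positive combination
    -- of `y` and a point of `K`
    have hs : 0 < 1 + |t| - t := by linarith [le_abs_self t]
    have hz : c + (1 + |t|) • x ∈ K := K.add_mem hc (K.smul_mem (by positivity) hx)
    refine hE.1.mem_of_smul_add_mem hy (K.smul_mem (inv_pos.2 hs).le hz) (inv_pos.2 hs) ?_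
    convert hE.2.1 using 1
    rw [← smul_add, show -(c + t • x) + (c + (1 + |t|) • x) = (1 + |t| - t) • x by module,
      smul_smul, inv_mul_cancel₀ hs.ne', one_smul]

theorem IsSmallestFace.span_eq_lineal_dirCone (hE : IsSmallestFace (K : Set Y) E x) :
    Submodule.span ℝ E = (K.dirCone x).lineal := by
  have hEq := hE.eq_inter_neg_dirCone
  refine le_antisymm (Submodule.span_le.2 fun e he => ?_) fun v hv => ?_
  · rw [hEq] at he
    exact ⟨le_sup_left (a := K) he.1, he.2⟩
  · obtain ⟨c, hc, t, rfl⟩ := PointedCone.mem_dirCone.1 hv.1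
    have htx : t • x ∈ (K.dirCone x).lineal :=
      PointedCone.span_singleton_le_lineal_dirCone
        (Submodule.smul_mem _ t (Submodule.mem_span_singleton_self x))
    have hcE : c ∈ E := by
      have hc' := (K.dirCone x).lineal.sub_mem hv htx
      rw [add_sub_cancel_right, PointedCone.mem_lineal] at hc'
      rw [hEq]
      exact ⟨hc, hc'.2⟩
    exact add_mem (Submodule.subset_span hcE)
      (Submodule.smul_mem _ t (Submodule.subset_span hE.2.1))

theorem IsSmallestFace.sup_span_eq_dirCone (hE : IsSmallestFace (K : Set Y) E x) :
    K ⊔ PointedCone.ofSubmodule (Submodule.span ℝ E) = K.dirCone x := by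
  refine le_antisymm (sup_le le_sup_left ?_) (sup_le_sup_left ?_ K)
  · rw [hE.span_eq_lineal_dirCone]
    exact PointedCone.lineal_le _
  · exact PointedCone.ofSubmodule_le_ofSubmodule.2
      (Submodule.span_mono (Set.singleton_subset_iff.2 hE.2.1))

theorem dualConeSet_closure (S : Set Y) : dualConeSet (closure S) = dualConeSet S := by
  refine Set.Subset.antisymm (fun y hy v hv => hy v (subset_closure hv)) fun y hy => ?_
  exact closure_minimal (t := {v | 0 ≤ ⟪y, v⟫}) hy
    (isClosed_le continuous_const (continuous_const.inner continuous_id))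

theorem PointedCone.closure_eq_dualConeSet_dualConeSet [CompleteSpace Y] (K : PointedCone ℝ Y) :
    closure (K : Set Y) = dualConeSet (dualConeSet K) := by
  have hinner (S : Set Y) : dualConeSet S = ProperCone.innerDual S := by
    ext y
    simp [dualConeSet, real_inner_comm]
  have := congrArg SetLike.coe (ProperCone.innerDual_innerDual (Submodule.closure K))
  rw [← hinner, ← hinner] at this
  simp only [Submodule.coe_closure, dualConeSet_closure] at this
  exact this.symm

theorem conjFace_eq_dualConeSet_sup_span (K : PointedCone ℝ Y) (E : Set Y) :
    conjFace K E =
      dualConeSet (K ⊔ PointedCone.ofSubmodule (Submodule.span ℝ E) : PointedCone ℝ Y) := by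
  ext y
  constructor
  · rintro ⟨hyK, hyE⟩ v hv
    obtain ⟨c, hc, s, hs, rfl⟩ := Submodule.mem_sup.1 hv
    have hker : Submodule.span ℝ E ≤ LinearMap.ker (innerₛₗ ℝ y) := Submodule.span_le.2 hyE
    have hys : ⟪y, s⟫ = 0 := by simpa using hker hs
    rw [inner_add_right, hys]
    simpa using hyK c hc
  · intro hy
    have hspan : PointedCone.ofSubmodule (Submodule.span ℝ E) ≤ K ⊔ _ := le_sup_right
    refine ⟨fun c hc => hy c (le_sup_left (a := K) hc), fun e he => ?_⟩
    have h₁ := hy e (hspan (Submodule.subset_span he))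
    have h₂ := hy (-e) (hspan ((Submodule.span ℝ E).neg_mem (Submodule.subset_span he)))
    rw [inner_neg_right] at h₂
    linarith

theorem mem_dualConeSet_and_neg_mem_iff {S : Set Y} {v : Y} :
    v ∈ dualConeSet S ∧ -v ∈ dualConeSet S ↔ ∀ w ∈ S, ⟪v, w⟫ = 0 := by
  simp only [dualConeSet, Set.mem_ofPred_eq, inner_neg_left, neg_nonneg, ← forall_and]
  exact forall₂_congr fun _ _ => le_antisymm_iff.symm.trans eq_comm

end

theorem dir_ldir_cldir_tan_eq_general
    {Y : Type*} [NormedAddCommGroup Y] [InnerProductSpace ℝ Y] [FiniteDimensional ℝ Y]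
    (C : Set Y)
    (hCconv : Convex ℝ C)
    (hCcone : ∀ (t : ℝ), 0 ≤ t → ∀ y ∈ C, t • y ∈ C)
    (x : Y)
    (E : Set Y) (hE : IsSmallestFace C E x) :
    dirSet x C = C + (Submodule.span ℝ E : Set Y) ∧
    ldirSet x C = (Submodule.span ℝ E : Set Y) ∧
    closure (dirSet x C) = dualConeSet (conjFace C E) ∧
    tanSet x C = {y : Y | ∀ w ∈ conjFace C E, ⟪y, w⟫ = 0} := by
  obtain ⟨K, rfl⟩ := exists_pointedCone_coe_eq hCconv hCcone ⟨x, hE.1.1 hE.2.1⟩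
  have hdir : dirSet x K = K.dirCone x := K.dirSet_eq_dirCone (hE.1.1 hE.2.1)
  have hcl : closure (dirSet x K) = dualConeSet (conjFace K E) := by
    have := FiniteDimensional.complete ℝ Y
    rw [hdir, PointedCone.closure_eq_dualConeSet_dualConeSet, conjFace_eq_dualConeSet_sup_span,
      hE.sup_span_eq_dirCone]
  refine ⟨?_, ?_, hcl, ?_⟩
  · rw [hdir, ← hE.sup_span_eq_dirCone, Submodule.coe_sup]
    rfl
  · ext v
    rw [hE.span_eq_lineal_dirCone, SetLike.mem_coe, PointedCone.mem_lineal, ldirSet,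
      Set.mem_ofPred_eq, hdir]
    rfl
  · ext v
    rw [tanSet, Set.mem_ofPred_eq, hcl]
    exact mem_dualConeSet_and_neg_mem_iff

/-- for a closed convex cone `C`, `x ∈ C`, and `E` the smallest face of `C`
containing `x`: `dir(x,C) = C + lin E`, `ldir(x,C) = lin E`, `cl dir(x,C) = (E^△)*`, and
`tan(x,C) = (E^△)^⊥`. -/
theorem dir_ldir_cldir_tan_eq
    {Y : Type*} [NormedAddCommGroup Y] [InnerProductSpace ℝ Y] [FiniteDimensional ℝ Y]
    (C : Set Y)
    (hCclosed : IsClosed C) (hCconv : Convex ℝ C)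
    (hCcone : ∀ (t : ℝ), 0 ≤ t → ∀ y ∈ C, t • y ∈ C)
    (x : Y) (hx : x ∈ C)
    (E : Set Y) (hE : IsSmallestFace C E x) :
    dirSet x C = C + (Submodule.span ℝ E : Set Y) ∧
    ldirSet x C = (Submodule.span ℝ E : Set Y) ∧
    closure (dirSet x C) = dualConeSet (conjFace C E) ∧
    tanSet x C = {y : Y | ∀ w ∈ conjFace C E, ⟪y, w⟫ = 0} :=
  dir_ldir_cldir_tan_eq_general C hCconv hCcone x E hE
end
end

section
/- Define S₁ = (R(A) + b) ∩ K, S₂ = R(A, b) ∩ K, and S₃ = {(Ax + tb, t) : x ∈ X, t ∈ ℝ} ∩ (K × ℝ₊). Let z be a maximum slack of P (so z ∈ ri S₁) and let F be the smallest face of K containing z. If s₂ ∈ ri S₂ and (s₃, s₀) ∈ ri S₃ with s₃ ∈ K and s₀ ≥ 0, then: (1) s₂ ∈ ri F; (2) s₃ ∈ ri F and s₀ > 0; (3) dir(z, K) = dir(s₂, K) = dir(s₃, K). -/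
/-!
The smallest face `F` of `K` containing `z` is `{y ∈ K | z - y ∈ dir(z, K)}`, and `z ∈ ri F`.
Since `z ∈ ri S₁`, every point of `S₁` can be prolonged past `z` inside `K`, so `S₁ ⊆ F`; adding
a large multiple of `z` to a point of `S₂` and rescaling lands in `S₁`, and faces of cones are
closed under scaling and split sums, so `S₂ ⊆ F`. Prolonging `s₂` (resp. `(s₃, s₀)`) past `z`
(resp. `(z, 1)`) inside its own slack set gives `s + ε (s - z) ∈ F`, which together with
`z ∈ ri F` puts `s ∈ ri F`; the last coordinate of the prolongation, `s₀ + ε (s₀ - 1) ≥ 0`,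
forces `s₀ > 0`. Finally, any two points of `ri F` can be prolonged past each other inside `K`,
which makes their cones of feasible directions in `K` equal.
-/

open scoped RealInnerProductSpace

noncomputable section

open Set Filter Topology

section IntrinsicInterior

variable {Y : Type*} [NormedAddCommGroup Y] [NormedSpace ℝ Y] {S : Set Y} {x y : Y}

theorem mem_intrinsicInterior_iff_mem_nhdsWithin :
    x ∈ intrinsicInterior ℝ S ↔
      x ∈ affineSpan ℝ S ∧ S ∈ 𝓝[(affineSpan ℝ S : Set Y)] x := by
  constructor
  · rintro ⟨p, hp, rfl⟩
    exact ⟨p.2, preimage_coe_mem_nhds_subtype.1 (mem_interior_iff_mem_nhds.1 hp)⟩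
  · rintro ⟨hx, hS⟩
    exact ⟨⟨x, hx⟩, mem_interior_iff_mem_nhds.2 (preimage_coe_mem_nhds_subtype.2 hS), rfl⟩

theorem exists_add_smul_sub_mem_of_mem_intrinsicInterior (hx : x ∈ intrinsicInterior ℝ S)
    (hy : y ∈ S) : ∃ ε : ℝ, 0 < ε ∧ x + ε • (x - y) ∈ S := by
  obtain ⟨hxA, hS⟩ := mem_intrinsicInterior_iff_mem_nhdsWithin.1 hx
  have hline : ∀ t : ℝ, x + t • (x - y) ∈ affineSpan ℝ S := fun t => by
    simpa [add_comm] using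
      (affineSpan ℝ S).smul_vsub_vadd_mem t hxA (subset_affineSpan ℝ S hy) hxA
  have hlim : Tendsto (fun t : ℝ => x + t • (x - y)) (𝓝 0) (𝓝[(affineSpan ℝ S : Set Y)] x) :=
    tendsto_nhdsWithin_iff.2
      ⟨(by fun_prop : Continuous fun t : ℝ => x + t • (x - y)).tendsto' 0 x (by simp),
        Eventually.of_forall hline⟩
  obtain ⟨ε, hεS, hε⟩ :=
    ((hlim.eventually hS).filter_mono nhdsWithin_le_nhds).and (self_mem_nhdsWithin (s := Ioi 0))
      |>.exists
  exact ⟨ε, hε, hεS⟩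

theorem Convex.combo_intrinsicInterior_self_mem_intrinsicInterior (hS : Convex ℝ S)
    (hx : x ∈ intrinsicInterior ℝ S) (hy : y ∈ S) {a b : ℝ} (ha : 0 < a) (hb : 0 ≤ b)
    (hab : a + b = 1) : a • x + b • y ∈ intrinsicInterior ℝ S := by
  obtain ⟨hxA, hSx⟩ := mem_intrinsicInterior_iff_mem_nhdsWithin.1 hx
  have hyA := subset_affineSpan ℝ S hy
  obtain rfl : b = 1 - a := by linarith
  have hcombo : ∀ (r : ℝ) (p : Y), r • p + (1 - r) • y = r • (p -ᵥ y) +ᵥ y := fun r p => by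
    simp only [vsub_eq_sub, vadd_eq_add]; module
  -- `g` undoes the homothety of ratio `a` centred at `y`, and it preserves `affineSpan ℝ S`
  set g : Y → Y := fun p => a⁻¹ • p + (1 - a⁻¹) • y
  have hgx : g (a • x + (1 - a) • y) = x := by
    simp only [g]; match_scalars <;> field_simp; ring
  have hgA : MapsTo g (affineSpan ℝ S) (affineSpan ℝ S) := fun p hp => by
    show g p ∈ affineSpan ℝ S
    simpa only [g, hcombo] using (affineSpan ℝ S).smul_vsub_vadd_mem a⁻¹ hp hyA hyA
  have hg : Tendsto g (𝓝[(affineSpan ℝ S : Set Y)] (a • x + (1 - a) • y))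
      (𝓝[(affineSpan ℝ S : Set Y)] x) := by
    simpa only [hgx] using ((by fun_prop : Continuous g).continuousWithinAt
      (x := a • x + (1 - a) • y)).tendsto_nhdsWithin hgA
  refine mem_intrinsicInterior_iff_mem_nhdsWithin.2
    ⟨by simpa only [hcombo] using (affineSpan ℝ S).smul_vsub_vadd_mem a hxA hyA hyA,
      mem_of_superset (hg hSx) fun p hp => ?_⟩
  have hgp : a • g p + (1 - a) • y = p := by
    simp only [g]; match_scalars <;> field_simp; ring
  exact hgp ▸ hS hp hy ha.le hb hab

theorem mem_intrinsicInterior_of_add_smul_sub_mem (hS : Convex ℝ S)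
    (hy : y ∈ intrinsicInterior ℝ S) {μ : ℝ} (hμ : 0 < μ) (h : x + μ • (x - y) ∈ S) :
    x ∈ intrinsicInterior ℝ S := by
  have hcombo := hS.combo_intrinsicInterior_self_mem_intrinsicInterior hy h
    (a := μ / (1 + μ)) (b := 1 / (1 + μ)) (by positivity) (by positivity) (by field_simp; ring)
  convert hcombo using 1
  match_scalars <;> field_simp; ring

theorem mem_openSegment_add_smul_sub {μ : ℝ} (hμ : 0 < μ) :
    x ∈ openSegment ℝ y (x + μ • (x - y)) :=
  ⟨μ / (1 + μ), 1 / (1 + μ), by positivity, by positivity, by field_simp; ring, by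
    match_scalars <;> field_simp; ring⟩

end IntrinsicInterior

section DirSet

variable {Y : Type*} [NormedAddCommGroup Y] [InnerProductSpace ℝ Y] {K F : Set Y} {x y u v w : Y}

theorem sub_mem_dirSet (hy : y ∈ K) : y - x ∈ dirSet x K :=
  ⟨1, one_pos, by simpa using hy⟩

theorem smul_mem_dirSet (hx : x ∈ K) (hv : v ∈ dirSet x K) {l : ℝ} (hl : 0 ≤ l) :
    l • v ∈ dirSet x K := by
  obtain ⟨ε, hε, hεv⟩ := hv
  rcases hl.eq_or_lt with rfl | hl
  · exact ⟨1, one_pos, by simpa using hx⟩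
  · exact ⟨ε / l, by positivity, by rwa [smul_smul, div_mul_cancel₀ _ hl.ne']⟩

theorem add_mem_dirSet (hK : Convex ℝ K) (hv : v ∈ dirSet x K) (hw : w ∈ dirSet x K) :
    v + w ∈ dirSet x K := by
  obtain ⟨ε, hε, hεv⟩ := hv
  obtain ⟨δ, hδ, hδw⟩ := hw
  refine ⟨ε * δ / (ε + δ), by positivity, ?_⟩
  convert hK hεv hδw (a := δ / (ε + δ)) (b := ε / (ε + δ)) (by positivity) (by positivity)
    (by field_simp; ring) using 1
  match_scalars <;> field_simp; ring

theorem dirSet_subset_dirSet (hK : Convex ℝ K) (hv : v ∈ K) (hvu : v - u ∈ dirSet v K) :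
    dirSet u K ⊆ dirSet v K := by
  rintro w ⟨ε, hε, hεw⟩
  -- `(u + ε w - v) + (v - u) = ε w`
  have hεw' : ε • w ∈ dirSet v K := by
    simpa using add_mem_dirSet hK (sub_mem_dirSet hεw) hvu
  simpa [smul_smul, inv_mul_cancel₀ hε.ne'] using smul_mem_dirSet hv hεw' (inv_nonneg.2 hε.le)

theorem dirSet_eq_of_mem_intrinsicInterior (hK : Convex ℝ K) (hFK : F ⊆ K)
    (hu : u ∈ intrinsicInterior ℝ F) (hv : v ∈ intrinsicInterior ℝ F) :
    dirSet u K = dirSet v K := by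
  have hsub : ∀ {p q}, p ∈ intrinsicInterior ℝ F → q ∈ intrinsicInterior ℝ F →
      dirSet p K ⊆ dirSet q K := fun {p q} hp hq => by
    obtain ⟨t, ht, hqt⟩ :=
      exists_add_smul_sub_mem_of_mem_intrinsicInterior hq (intrinsicInterior_subset hp)
    exact dirSet_subset_dirSet hK (hFK (intrinsicInterior_subset hq)) ⟨t, ht, hFK hqt⟩
  exact (hsub hu hv).antisymm (hsub hv hu)

end DirSet

section Face

variable {Y : Type*} [NormedAddCommGroup Y] [InnerProductSpace ℝ Y] {K E F : Set Y} {u w y z : Y}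

/-- Halving the segment from `u` keeps the far end in `E` while the near end doubles its
parameter, so after finitely many halvings the parameter exceeds `1/2` and `w` is reached. -/
theorem IsFaceOf.mem_of_add_smul_sub_mem (hK : Convex ℝ K) (hE : IsFaceOf K E) (hu : u ∈ K)
    (hw : w ∈ K) {c : ℝ} (hc₀ : 0 < c) (hc₁ : c ≤ 1) (h : u + c • (w - u) ∈ E) : w ∈ E := by
  have hseg : ∀ a : ℝ, 0 ≤ a → a ≤ 1 → u + a • (w - u) ∈ K := fun a ha₀ ha₁ => by
    convert hK hu hw (sub_nonneg.2 ha₁) ha₀ (by ring) using 1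
    module
  have hright : ∀ a₁ a₂ : ℝ, 0 ≤ a₁ → a₁ ≤ 1 → 0 ≤ a₂ → a₂ ≤ 1 →
      u + ((a₁ + a₂) / 2) • (w - u) ∈ E → u + a₂ • (w - u) ∈ E := by
    intro a₁ a₂ h₁₀ h₁₁ h₂₀ h₂₁ hmid
    refine (hE.2.2 _ (hseg a₁ h₁₀ h₁₁) _ (hseg a₂ h₂₀ h₂₁) ?_).2
    convert hmid using 1
    module
  have hlarge : ∀ a : ℝ, 1 / 2 < a → a ≤ 1 → u + a • (w - u) ∈ E → w ∈ E := by
    intro a ha₀ ha₁ ha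
    simpa using hright (2 * a - 1) 1 (by linarith) (by linarith) zero_le_one le_rfl
      (by convert ha using 3; ring)
  suffices ∀ n : ℕ, ∀ a : ℝ, 0 < a → a ≤ 1 → 1 < 2 ^ n * (2 * a) → u + a • (w - u) ∈ E →
      w ∈ E by
    obtain ⟨n, hn⟩ := pow_unbounded_of_one_lt (1 / (2 * c)) one_lt_two
    exact this n c hc₀ hc₁ (by rwa [div_lt_iff₀ (by positivity)] at hn) h
  intro n
  induction n with
  | zero => exact fun a _ ha₁ hn ha => hlarge a (by linarith) ha₁ ha
  | succ n ih =>
    intro a ha₀ ha₁ hn ha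
    rcases le_or_gt a (1 / 2) with ha' | ha'
    · refine ih (2 * a) (by linarith) (by linarith) (by rw [pow_succ] at hn; linarith) ?_
      exact hright 0 (2 * a) le_rfl zero_le_one (by linarith) (by linarith)
        (by convert ha using 3; ring)
    · exact hlarge a ha' ha₁ ha

theorem IsFaceOf.isExtreme (hK : Convex ℝ K) (hE : IsFaceOf K E) : IsExtreme ℝ K E := by
  refine ⟨hE.1, fun x hx y hy z hz ⟨a, b, ha, hb, hab, hxyz⟩ => ?_⟩
  refine hE.mem_of_add_smul_sub_mem hK hy hx ha (by linarith) ?_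
  convert hz using 1
  rw [← hxyz, eq_sub_of_add_eq' hab]
  module

theorem IsFaceOf.mem_and_mem_of_add_smul_sub_mem (hK : Convex ℝ K) (hE : IsFaceOf K E)
    (hz : z ∈ E) (hy : y ∈ K) {μ : ℝ} (hμ : 0 < μ) (h : z + μ • (z - y) ∈ K) :
    y ∈ E ∧ z + μ • (z - y) ∈ E :=
  ⟨(hE.isExtreme hK).left_mem_of_mem_openSegment hy h hz (mem_openSegment_add_smul_sub hμ),
    (hE.isExtreme hK).right_mem_of_mem_openSegment hy h hz (mem_openSegment_add_smul_sub hμ)⟩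

theorem isFaceOf_setOf_sub_mem_dirSet (hK : Convex ℝ K) (hz : z ∈ K) :
    IsFaceOf K {y | y ∈ K ∧ z - y ∈ dirSet z K} := by
  refine ⟨fun y hy => hy.1, ?_, fun y₁ hy₁ y₂ hy₂ ⟨_, hmid⟩ => ?_⟩
  · rintro y₁ ⟨hy₁, hzy₁⟩ y₂ ⟨hy₂, hzy₂⟩ a b ha hb hab
    refine ⟨hK hy₁ hy₂ ha hb hab, ?_⟩
    convert add_mem_dirSet hK (smul_mem_dirSet hz hzy₁ ha) (smul_mem_dirSet hz hzy₂ hb) using 1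
    rw [eq_sub_of_add_eq' hab]
    module
  · -- `z - y₁ = 2 (z - (y₁ + y₂) / 2) + (y₂ - z)`, and symmetrically for `y₂`
    have hz₁ := smul_mem_dirSet hz hmid zero_le_two
    refine ⟨⟨hy₁, ?_⟩, ⟨hy₂, ?_⟩⟩
    · convert add_mem_dirSet hK hz₁ (sub_mem_dirSet hy₂) using 1
      module
    · convert add_mem_dirSet hK hz₁ (sub_mem_dirSet hy₁) using 1
      module

theorem IsSmallestFace.eq_setOf_sub_mem_dirSet (hK : Convex ℝ K) (hF : IsSmallestFace K F z) :
    F = {y | y ∈ K ∧ z - y ∈ dirSet z K} := by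
  have hzK : z ∈ K := hF.1.1 hF.2.1
  refine (hF.2.2 _ (isFaceOf_setOf_sub_mem_dirSet hK hzK) ⟨hzK, sub_mem_dirSet hzK⟩).antisymm ?_
  rintro y ⟨hy, μ, hμ, hμy⟩
  exact (hF.1.mem_and_mem_of_add_smul_sub_mem hK hF.2.1 hy hμ hμy).1

theorem IsSmallestFace.mem_intrinsicInterior [FiniteDimensional ℝ Y] (hK : Convex ℝ K)
    (hF : IsSmallestFace K F z) : z ∈ intrinsicInterior ℝ F := by
  obtain ⟨u, hu⟩ := Set.Nonempty.intrinsicInterior hF.1.2.1 ⟨z, hF.2.1⟩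
  have huF := intrinsicInterior_subset hu
  rw [hF.eq_setOf_sub_mem_dirSet hK] at huF
  obtain ⟨huK, μ, hμ, hμu⟩ := huF
  exact mem_intrinsicInterior_of_add_smul_sub_mem hF.1.2.1 hu hμ
    (hF.1.mem_and_mem_of_add_smul_sub_mem hK hF.2.1 huK hμ hμu).2

theorem IsSmallestFace.subset_of_mem_intrinsicInterior (hK : Convex ℝ K)
    (hF : IsSmallestFace K F z) {S : Set Y} (hSK : S ⊆ K) (hz : z ∈ intrinsicInterior ℝ S) :
    S ⊆ F := fun y hy => by
  obtain ⟨ε, hε, hεy⟩ := exists_add_smul_sub_mem_of_mem_intrinsicInterior hz hy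
  rw [hF.eq_setOf_sub_mem_dirSet hK]
  exact ⟨hSK hy, ε, hε, hSK hεy⟩

end Face

section Cone

variable {Y : Type*} [NormedAddCommGroup Y] [InnerProductSpace ℝ Y] {K E : Set Y} {u w y : Y}
  (hK : Convex ℝ K) (hKcone : ∀ (t : ℝ), 0 ≤ t → ∀ x ∈ K, t • x ∈ K)
include hK hKcone

theorem add_mem_of_convex_cone (hu : u ∈ K) (hw : w ∈ K) : u + w ∈ K := by
  convert hKcone 2 zero_le_two _ (hK hu hw (by norm_num) (by norm_num) (by norm_num :
    (1 / 2 : ℝ) + 1 / 2 = 1)) using 1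
  module

theorem IsFaceOf.smul_mem_s9 (hE : IsFaceOf K E) (hy : y ∈ E) {l : ℝ} (hl : 0 ≤ l) : l • y ∈ E := by
  have hyK := hE.1 hy
  have hseg : y ∈ openSegment ℝ 0 ((l + 2) • y) :=
    ⟨(l + 1) / (l + 2), 1 / (l + 2), by positivity, by positivity, by field_simp; ring, by
      rw [smul_zero, zero_add, smul_smul, one_div_mul_cancel (by positivity), one_smul]⟩
  have h0K : (0 : Y) ∈ K := by simpa using hKcone 0 le_rfl y hyK
  have hlK := hKcone (l + 2) (by positivity) y hyK
  have hEconv : Convex ℝ E := hE.2.1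
  convert hEconv ((hE.isExtreme hK).left_mem_of_mem_openSegment h0K hlK hy hseg)
    ((hE.isExtreme hK).right_mem_of_mem_openSegment h0K hlK hy hseg)
    (a := 2 / (l + 2)) (b := l / (l + 2)) (by positivity) (by positivity) (by field_simp; ring)
    using 1
  rw [smul_zero, zero_add, smul_smul, div_mul_cancel₀ _ (by positivity)]

theorem IsFaceOf.left_mem_of_add_mem (hE : IsFaceOf K E) (hu : u ∈ K) (hw : w ∈ K)
    (h : u + w ∈ E) : u ∈ E := by
  have h2u := hE.2.2 _ (hKcone 2 zero_le_two u hu) _ (hKcone 2 zero_le_two w hw)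
    (by convert h using 1; module)
  simpa using hE.smul_mem_s9 hK hKcone h2u.1 (l := 1 / 2) (by norm_num)

theorem IsFaceOf.homogenized_subset {X : Type*} [AddCommGroup X] [Module ℝ X]
    (hE : IsFaceOf K E) (A : X →ₗ[ℝ] Y) (b : Y) {z : Y}
    (hz : z ∈ {w : Y | ∃ x : X, w = A x + b} ∩ K)
    (hsub : {w : Y | ∃ x : X, w = A x + b} ∩ K ⊆ E) :
    {w : Y | ∃ (x : X) (t : ℝ), w = A x + t • b} ∩ K ⊆ E := by
  rintro _ ⟨⟨x, t, rfl⟩, hwK⟩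
  obtain ⟨⟨xz, rfl⟩, hzK⟩ := hz
  -- adding `s z` with `t + s > 0` and rescaling lands in the affine slice
  set s := |t| + 1
  have hts : 0 < t + s := by linarith [neg_abs_le t]
  have hszK := hKcone s (by positivity) _ hzK
  have hsum := add_mem_of_convex_cone hK hKcone hwK hszK
  have hscaled : (t + s)⁻¹ • (A x + t • b + s • (A xz + b)) ∈ E := by
    refine hsub ⟨⟨(t + s)⁻¹ • (x + s • xz), ?_⟩, hKcone _ (by positivity) _ hsum⟩
    simp only [map_smul, map_add]
    match_scalars <;> field_simp
  have := hE.smul_mem_s9 hK hKcone hscaled hts.le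
  rw [smul_inv_smul₀ hts.ne'] at this
  exact hE.left_mem_of_add_mem hK hKcone hwK hszK this

end Cone

theorem maxslack_ri_lemma_general
    {X Y : Type*}
    [NormedAddCommGroup X] [InnerProductSpace ℝ X]
    [NormedAddCommGroup Y] [InnerProductSpace ℝ Y] [FiniteDimensional ℝ Y]
    (A : X →ₗ[ℝ] Y) (b : Y) (K : Set Y)
    (hKconv : Convex ℝ K)
    (hKcone : ∀ (t : ℝ), 0 ≤ t → ∀ x ∈ K, t • x ∈ K)
    (z : Y)
    (hz : z ∈ intrinsicInterior ℝ ({w : Y | ∃ x : X, w = A x + b} ∩ K))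
    (F : Set Y) (hF : IsSmallestFace K F z)
    (s₂ : Y)
    (hs₂ : s₂ ∈ intrinsicInterior ℝ
      ({w : Y | ∃ (x : X) (t : ℝ), w = A x + t • b} ∩ K))
    (s₃ : Y) (s₀ : ℝ)
    (hs₃ : (s₃, s₀) ∈ intrinsicInterior ℝ
      ({p : Y × ℝ | ∃ (x : X) (t : ℝ), p = (A x + t • b, t)} ∩
        (K ×ˢ {t : ℝ | 0 ≤ t}))) :
    s₂ ∈ intrinsicInterior ℝ F ∧
    (s₃ ∈ intrinsicInterior ℝ F ∧ 0 < s₀) ∧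
    (dirSet z K = dirSet s₂ K ∧ dirSet z K = dirSet s₃ K) := by
  have hFconv : Convex ℝ F := hF.1.2.1
  have hzS₁ := intrinsicInterior_subset hz
  have hS₂F := hF.1.homogenized_subset hKconv hKcone A b hzS₁
    (hF.subset_of_mem_intrinsicInterior hKconv inter_subset_right hz)
  have hzF := hF.mem_intrinsicInterior hKconv
  obtain ⟨⟨xz, rfl⟩, hzK⟩ := hzS₁
  have hs₂F : s₂ ∈ intrinsicInterior ℝ F := by
    obtain ⟨ε, hε, hεs₂⟩ := exists_add_smul_sub_mem_of_mem_intrinsicInterior hs₂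
      ⟨⟨xz, 1, by rw [one_smul]⟩, hzK⟩
    exact mem_intrinsicInterior_of_add_smul_sub_mem hFconv hzF hε (hS₂F hεs₂)
  obtain ⟨ε, hε, ⟨x, t, hxt⟩, hK₃, ht⟩ := exists_add_smul_sub_mem_of_mem_intrinsicInterior hs₃
    (y := (A xz + b, 1)) ⟨⟨xz, 1, by rw [one_smul]⟩, hzK, zero_le_one (α := ℝ)⟩
  simp only [Prod.ext_iff, Prod.fst_add, Prod.snd_add, Prod.smul_fst, Prod.smul_snd,
    Prod.fst_sub, Prod.snd_sub, smul_eq_mul, mem_ofPred_eq] at hxt hK₃ ht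
  have hs₀ : 0 < s₀ := by nlinarith
  have hs₃F : s₃ ∈ intrinsicInterior ℝ F :=
    mem_intrinsicInterior_of_add_smul_sub_mem hFconv hzF hε (hS₂F ⟨⟨x, t, hxt.1⟩, hK₃⟩)
  exact ⟨hs₂F, ⟨hs₃F, hs₀⟩, dirSet_eq_of_mem_intrinsicInterior hKconv hF.1.1 hzF hs₂F,
    dirSet_eq_of_mem_intrinsicInterior hKconv hF.1.1 hzF hs₃F⟩

/-- let `S₁ = (R(A)+b) ∩ K`, `S₂ = R(A,b) ∩ K`,
`S₃ = {(Ax + tb, t)} ∩ (K × ℝ₊)`, `z ∈ ri S₁` a maximum slack, and `F` the smallest face of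
`K` containing `z`. If `s₂ ∈ ri S₂` and `(s₃, s₀) ∈ ri S₃`, then `s₂ ∈ ri F`; `s₃ ∈ ri F` and
`s₀ > 0`; and `dir(z,K) = dir(s₂,K) = dir(s₃,K)`. -/
theorem maxslack_ri_lemma
    {X Y : Type*}
    [NormedAddCommGroup X] [InnerProductSpace ℝ X] [FiniteDimensional ℝ X]
    [NormedAddCommGroup Y] [InnerProductSpace ℝ Y] [FiniteDimensional ℝ Y]
    (A : X →ₗ[ℝ] Y) (b : Y) (K : Set Y)
    (hKclosed : IsClosed K) (hKconv : Convex ℝ K)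
    (hKcone : ∀ (t : ℝ), 0 ≤ t → ∀ x ∈ K, t • x ∈ K)
    (hP : ∃ x : X, b - A x ∈ K)
    (z : Y)
    (hz : z ∈ intrinsicInterior ℝ ({w : Y | ∃ x : X, w = A x + b} ∩ K))
    (F : Set Y) (hF : IsSmallestFace K F z)
    (s₂ : Y)
    (hs₂ : s₂ ∈ intrinsicInterior ℝ
      ({w : Y | ∃ (x : X) (t : ℝ), w = A x + t • b} ∩ K))
    (s₃ : Y) (s₀ : ℝ)
    (hs₃ : (s₃, s₀) ∈ intrinsicInterior ℝ
      ({p : Y × ℝ | ∃ (x : X) (t : ℝ), p = (A x + t • b, t)} ∩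
        (K ×ˢ {t : ℝ | 0 ≤ t}))) :
    s₂ ∈ intrinsicInterior ℝ F ∧
    (s₃ ∈ intrinsicInterior ℝ F ∧ 0 < s₀) ∧
    (dirSet z K = dirSet s₂ K ∧ dirSet z K = dirSet s₃ K) :=
  maxslack_ri_lemma_general A b K hKconv hKcone z hz F hF s₂ hs₂ s₃ s₀ hs₃
end
end

section
/- Let Z = I_r ⊕ 0 ∈ S^n₊ and for Y ∈ S^n write Y = [[Y₁₁, Y₁₂], [Y₁₂ᵀ, Y₂₂]] with Y₁₁ of size r×r and Y₂₂ of size (n−r)×(n−r). Then: ldir(Z, S^n₊) = {Y : Y₁₂ = 0 and Y₂₂ = 0}; cl dir(Z, S^n₊) = {Y : Y₂₂ ⪰ 0}; tan(Z, S^n₊) = {Y : Y₂₂ = 0}; and dir(Z, S^n₊) = {Y : Y₂₂ ⪰ 0 and R(Y₁₂ᵀ) ⊆ R(Y₂₂)}, where R(M) denotes the column space of a matrix M. -/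
open Matrix

noncomputable section

/-- The set of feasible directions at `Z` in a set `C` of matrices. -/
def dirMat {n : ℕ} (Z : Matrix (Fin n) (Fin n) ℝ)
    (C : Set (Matrix (Fin n) (Fin n) ℝ)) : Set (Matrix (Fin n) (Fin n) ℝ) :=
  {V | ∃ ε : ℝ, 0 < ε ∧ Z + ε • V ∈ C}

/-- The lineality space of the set of feasible directions at `Z` in `C`. -/
def ldirMat {n : ℕ} (Z : Matrix (Fin n) (Fin n) ℝ)
    (C : Set (Matrix (Fin n) (Fin n) ℝ)) : Set (Matrix (Fin n) (Fin n) ℝ) :=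
  {V | V ∈ dirMat Z C ∧ -V ∈ dirMat Z C}

/-- The tangent space at `Z` in `C`. -/
def tanMat {n : ℕ} (Z : Matrix (Fin n) (Fin n) ℝ)
    (C : Set (Matrix (Fin n) (Fin n) ℝ)) : Set (Matrix (Fin n) (Fin n) ℝ) :=
  {V | V ∈ closure (dirMat Z C) ∧ -V ∈ closure (dirMat Z C)}

/-- The cone of positive semidefinite `n × n` real matrices. -/
def PSDCone (n : ℕ) : Set (Matrix (Fin n) (Fin n) ℝ) := {M | M.PosSemidef}

/-- The block matrix `I_r ⊕ 0` of size `n × n`. -/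
def ZMat (n r : ℕ) : Matrix (Fin n) (Fin n) ℝ :=
  fun i j => if i = j ∧ (i : ℕ) < r then 1 else 0

/-- The bottom-right `(n-r) × (n-r)` block `Y₂₂` of `Y` is positive semidefinite. -/
def BottomBlockPSD {n : ℕ} (r : ℕ) (Y : Matrix (Fin n) (Fin n) ℝ) : Prop :=
  ∀ x : Fin n → ℝ, (∀ i : Fin n, (i : ℕ) < r → x i = 0) → 0 ≤ x ⬝ᵥ (Y *ᵥ x)

/-!
Write `Q = 1 - Z`. If `Z + ε V ⪰ 0`, compressing by `Q` kills `Z`, so `Q V Q ⪰ 0`; and since a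
positive semidefinite matrix factors as `Bᴴ B`, the range of `Q (Z + ε V) = ε Q V` lies in the range
of `Q (Z + ε V) Q = ε Q V Q`. Conversely, if `Q V Z = (Q V Q) F Z`, completing the square gives
`Z + ε V = Z (1 - ε K) Z + ε Tᴴ (Q V Q) T` with `K`, `T` independent of `ε`, and `1 - ε K ⪰ 0` for
small `ε`. For the closure, `V + t Q` satisfies the range condition because `Q V Q + t` is
invertible; `tan` and `ldir` follow by intersecting with the negatives.
-/

open scoped MatrixOrder

namespace Matrix

theorem PosSemidef.eq_zero_of_neg {n : Type*} {A : Matrix n n ℝ} (hA : A.PosSemidef)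
    (hA' : (-A).PosSemidef) : A = 0 :=
  le_antisymm (by rwa [le_iff, zero_sub]) hA.nonneg

theorem exists_eq_mul_of_range_le {m n k : Type*} [Fintype n] [Fintype k] [DecidableEq k]
    {A : Matrix m k ℝ} {C : Matrix m n ℝ}
    (h : LinearMap.range A.mulVecLin ≤ LinearMap.range C.mulVecLin) :
    ∃ F : Matrix n k ℝ, A = C * F := by
  choose f hf using fun j => h ⟨Pi.single j 1, rfl⟩
  refine ⟨(of f)ᵀ, ?_⟩
  ext i j
  have := congrFun (hf j) i
  rw [mulVecLin_apply, mulVecLin_apply, mulVec_single_one, col_apply] at this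
  rw [mul_apply, ← this]
  simp only [mulVec, dotProduct, transpose_apply, of_apply]

variable {m n : Type*} [Fintype m] [Fintype n]

theorem IsHermitian.exists_posSemidef_one_sub_smul [DecidableEq n] {K : Matrix n n ℝ}
    (hK : K.IsHermitian) : ∃ ε : ℝ, 0 < ε ∧ (1 - ε • K).PosSemidef := by
  set c := ∑ i, |hK.eigenvalues i|
  have hle : K ≤ algebraMap ℝ _ c := by
    refine le_algebraMap_of_spectrum_le (fun x hx => ?_) hK.isSelfAdjoint
    obtain ⟨i, rfl⟩ := hK.spectrum_real_eq_range_eigenvalues ▸ hx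
    exact (le_abs_self _).trans
      (Finset.single_le_sum (fun j _ => abs_nonneg (hK.eigenvalues j)) (Finset.mem_univ i))
  have hc : 0 ≤ c := by positivity
  refine ⟨1 / (c + 1), by positivity, ?_⟩
  have h : 1 - (1 / (c + 1)) • K = (1 / (c + 1)) • (algebraMap ℝ _ c - K + 1) := by
    rw [Algebra.algebraMap_eq_smul_one]
    match_scalars <;> field_simp
  rw [h]
  exact ((sub_nonneg.mpr hle).posSemidef.add PosSemidef.one).smul (by positivity)

theorem isClosed_setOf_posSemidef : IsClosed {A : Matrix n n ℝ | A.PosSemidef} := by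
  simp only [posSemidef_iff_dotProduct_mulVec, Set.ofPred_and, Set.ofPred_forall]
  exact (isClosed_eq continuous_id.matrix_conjTranspose continuous_id).inter
    (isClosed_iInter fun x => isClosed_le continuous_const (by fun_prop))

theorem range_mulVecLin_conjTranspose_mul_self (A : Matrix m n ℝ) :
    LinearMap.range (Aᴴ * A).mulVecLin = LinearMap.range Aᴴ.mulVecLin := by
  refine Submodule.eq_of_le_of_finrank_eq ?_ ?_
  · rw [mulVecLin_mul]
    exact LinearMap.range_comp_le_range _ _
  · simpa only [rank] using (rank_conjTranspose_mul_self A).trans (rank_conjTranspose A).symm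

theorem PosSemidef.exists_conjTranspose_mul_eq [DecidableEq n] {M : Matrix n n ℝ}
    (hM : M.PosSemidef) (P : Matrix n m ℝ) : ∃ F : Matrix m n ℝ, Pᴴ * M = Pᴴ * M * P * F := by
  obtain ⟨B, rfl⟩ := CStarAlgebra.nonneg_iff_eq_star_mul_self.mp hM.nonneg
  apply exists_eq_mul_of_range_le
  have : Pᴴ * (star B * B) * P = (B * P)ᴴ * (B * P) := by
    rw [conjTranspose_mul, star_eq_conjTranspose]
    simp only [Matrix.mul_assoc]
  rw [this, range_mulVecLin_conjTranspose_mul_self, conjTranspose_mul, ← Matrix.mul_assoc,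
    mulVecLin_mul]
  exact LinearMap.range_comp_le_range _ _

theorem IsStarProjection.posSemidef_mul_mul_iff {P V : Matrix n n ℝ} (hP : IsStarProjection P)
    (hV : V.IsHermitian) : (P * V * P).PosSemidef ↔ ∀ x, P *ᵥ x = x → 0 ≤ x ⬝ᵥ V *ᵥ x := by
  have hPh : Pᴴ = P := hP.isSelfAdjoint.star_eq
  have key (x : n → ℝ) : star x ⬝ᵥ (Pᴴ * V * P) *ᵥ x = star (P *ᵥ x) ⬝ᵥ V *ᵥ (P *ᵥ x) := by
    simp only [star_mulVec, dotProduct_mulVec, vecMul_vecMul]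
  nth_rw 1 [← hPh]
  constructor
  · intro h x hx
    have := h.dotProduct_mulVec_nonneg x
    rwa [key, hx, star_trivial] at this
  · refine fun h => PosSemidef.of_dotProduct_mulVec_nonneg
      (isHermitian_conjTranspose_mul_mul P hV) fun x => ?_
    rw [key, star_trivial]
    exact h _ (by rw [mulVec_mulVec, hP.isIdempotentElem.eq])

end Matrix

section Ring

variable {R : Type*} [Ring R] [StarRing R] {Z : R}

/-- Block `LDLᴴ` factorisation with respect to `Z ⊕ (1 - Z)`: when the lower-left block of `V`
factors through its lower-right block `N`, `V` is the Schur complement `Z V Z - Z Fᴴ N F Z` of `N`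
plus a congruent copy of `N`. -/
theorem IsStarProjection.eq_schur_complement_add (hZ : IsStarProjection Z) {V F : R}
    (hV : IsSelfAdjoint V) (hF : (1 - Z) * V * Z = (1 - Z) * V * (1 - Z) * F * Z) :
    V = Z * V * Z - Z * star F * ((1 - Z) * V * (1 - Z)) * F * Z +
      star (F * Z + (1 - Z)) * ((1 - Z) * V * (1 - Z)) * (F * Z + (1 - Z)) := by
  have hQ := hZ.one_sub
  have hsum : Z + (1 - Z) = 1 := add_sub_cancel Z 1
  generalize 1 - Z = Q at hQ hF hsum ⊢
  have hQQ (A : R) : A * Q * Q = A * Q := by rw [mul_assoc, hQ.isIdempotentElem.eq]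
  have hZFN : Z * star F * Q * V * Q = Z * V * Q := by
    simpa only [star_mul, hZ.isSelfAdjoint.star_eq, hQ.isSelfAdjoint.star_eq, hV.star_eq,
      mul_assoc] using (congrArg star hF).symm
  have hT : star (F * Z + Q) * (Q * V * Q) * (F * Z + Q) =
      Z * star F * (Q * V * Q) * F * Z + Z * V * Q + Q * V * Z + Q * V * Q := by
    rw [star_add, star_mul, hZ.isSelfAdjoint.star_eq, hQ.isSelfAdjoint.star_eq]
    simp only [add_mul, mul_add, ← mul_assoc, hQQ, hQ.isIdempotentElem.eq, hZFN, hF]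
    abel
  rw [hT]
  calc V = (Z + Q) * V * (Z + Q) := by rw [hsum, one_mul, mul_one]
    _ = _ := by noncomm_ring

end Ring

section StarProjection

variable {n : ℕ} {Z : Matrix (Fin n) (Fin n) ℝ}

theorem mem_dirMat_PSDCone_of (hZ : IsStarProjection Z) {V F : Matrix (Fin n) (Fin n) ℝ}
    (hV : V.IsHermitian) (hN : ((1 - Z) * V * (1 - Z)).PosSemidef)
    (hF : (1 - Z) * V * Z = (1 - Z) * V * (1 - Z) * F * Z) :
    V ∈ dirMat Z (PSDCone n) := by
  have hdec := hZ.eq_schur_complement_add hV.isSelfAdjoint hF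
  set N := (1 - Z) * V * (1 - Z)
  set T := F * Z + (1 - Z)
  obtain ⟨ε, hε, hK⟩ :=
    ((isHermitian_conjTranspose_mul_mul F hN.isHermitian).sub hV).exists_posSemidef_one_sub_smul
  refine ⟨ε, hε, ?_⟩
  have key : Z + ε • V = Zᴴ * (1 - ε • (Fᴴ * N * F - V)) * Z + ε • (Tᴴ * N * T) := by
    have hZZ : Zᴴ * (1 - ε • (Fᴴ * N * F - V)) * Z = Z - ε • (Z * (Fᴴ * N * F - V) * Z) := by
      rw [← star_eq_conjTranspose, hZ.isSelfAdjoint.star_eq, mul_sub, sub_mul, mul_one,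
        hZ.isIdempotentElem.eq, mul_smul_comm, smul_mul_assoc]
    conv_lhs => rw [hdec]
    rw [hZZ]
    simp only [star_eq_conjTranspose, mul_sub, sub_mul, ← mul_assoc]
    module
  change (Z + ε • V).PosSemidef
  rw [key]
  exact (hK.conjTranspose_mul_mul_same Z).add ((hN.conjTranspose_mul_mul_same T).smul hε.le)

theorem mem_dirMat_PSDCone_iff (hZ : IsStarProjection Z) {V : Matrix (Fin n) (Fin n) ℝ} :
    V ∈ dirMat Z (PSDCone n) ↔ V.IsHermitian ∧ ((1 - Z) * V * (1 - Z)).PosSemidef ∧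
      ∃ F, (1 - Z) * V * Z = (1 - Z) * V * (1 - Z) * F * Z := by
  refine ⟨fun ⟨ε, hε, hM⟩ => ?_, fun ⟨hV, hN, F, hF⟩ => mem_dirMat_PSDCone_of hZ hV hN hF⟩
  change (Z + ε • V).PosSemidef at hM
  have hQ : (1 - Z)ᴴ = 1 - Z := hZ.one_sub.isSelfAdjoint.star_eq
  have hQM : (1 - Z) * (Z + ε • V) = ε • ((1 - Z) * V) := by
    rw [mul_add, hZ.one_sub_mul_self, zero_add, mul_smul_comm]
  refine ⟨?_, ?_, ?_⟩
  · have h := hM.isHermitian.eq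
    rw [conjTranspose_add, conjTranspose_smul, ← star_eq_conjTranspose Z,
      hZ.isSelfAdjoint.star_eq, star_trivial] at h
    exact smul_right_injective _ hε.ne' (add_left_cancel h)
  · have h := (hM.conjTranspose_mul_mul_same (1 - Z)).smul (inv_nonneg.mpr hε.le)
    rwa [hQ, hQM, smul_mul_assoc, smul_smul, inv_mul_cancel₀ hε.ne', one_smul] at h
  · obtain ⟨F, hF⟩ := hM.exists_conjTranspose_mul_eq (1 - Z)
    rw [hQ, hQM, smul_mul_assoc, smul_mul_assoc] at hF
    exact ⟨F, congrArg (· * Z) (smul_right_injective _ hε.ne' hF)⟩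

theorem add_smul_one_sub_mem_dirMat_PSDCone (hZ : IsStarProjection Z)
    {V : Matrix (Fin n) (Fin n) ℝ} (hV : V.IsHermitian)
    (hN : ((1 - Z) * V * (1 - Z)).PosSemidef) {t : ℝ} (ht : 0 < t) :
    V + t • (1 - Z) ∈ dirMat Z (PSDCone n) := by
  have hQ := hZ.one_sub
  have hZQ := hZ.mul_one_sub_self
  generalize hQdef : 1 - Z = Q at hN hQ hZQ ⊢
  have htQ := hQ.nonneg.posSemidef.smul ht.le
  have hMQ : Q * (V + t • Q) * Q = Q * V * Q + t • Q := by
    rw [mul_add, add_mul, mul_smul_comm, smul_mul_assoc, hQ.isIdempotentElem.eq,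
      hQ.isIdempotentElem.eq]
  obtain ⟨G, hGdef⟩ : ∃ G, G = Q * V * Q + t • 1 := ⟨_, rfl⟩
  have hG : IsUnit G.det :=
    G.isUnit_iff_isUnit_det.mp (hGdef ▸ PosDef.posSemidef_add hN (PosDef.one.smul ht)).isUnit
  have hZG : Z * G = t • Z := by
    rw [hGdef, mul_add, ← mul_assoc, ← mul_assoc, hZQ, zero_mul, zero_mul, zero_add,
      mul_smul_comm, mul_one]
  have hZGinv : Z * G⁻¹ = t⁻¹ • Z := by
    calc Z * G⁻¹ = t⁻¹ • (Z * G) * G⁻¹ := by rw [hZG, smul_smul, inv_mul_cancel₀ ht.ne', one_smul]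
      _ = t⁻¹ • Z := by rw [smul_mul_assoc, mul_assoc, mul_nonsing_inv G hG, mul_one]
  have hMQ' : Q * (V + t • Q) * Q = G - t • Z := by
    rw [hMQ, hGdef, ← hQdef, smul_sub]; abel
  refine mem_dirMat_PSDCone_of hZ (hV.add htQ.isHermitian) (by rw [hQdef, hMQ]; exact hN.add htQ)
    (F := G⁻¹ * (Q * (V + t • Q))) ?_
  -- with `M = V + t Q`: `(G - t Z) G⁻¹ Q M Z = Q M Z - (Z Q) M Z = Q M Z`
  rw [hQdef, hMQ', sub_mul, sub_mul, ← mul_assoc, mul_nonsing_inv G hG, one_mul, smul_mul_assoc,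
    smul_mul_assoc, ← mul_assoc, hZGinv, smul_mul_assoc, smul_mul_assoc, smul_smul,
    mul_inv_cancel₀ ht.ne', one_smul, ← mul_assoc, hZQ, zero_mul, zero_mul, sub_zero]

theorem closure_dirMat_PSDCone (hZ : IsStarProjection Z) :
    closure (dirMat Z (PSDCone n)) =
      {V | V.IsHermitian ∧ ((1 - Z) * V * (1 - Z)).PosSemidef} := by
  refine subset_antisymm (closure_minimal (fun V hV => ?_) ?_) (fun V ⟨hV, hN⟩ => ?_)
  · obtain ⟨hV, hN, -⟩ := (mem_dirMat_PSDCone_iff hZ).mp hV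
    exact ⟨hV, hN⟩
  · exact (isClosed_eq continuous_id.matrix_conjTranspose continuous_id).inter
      (isClosed_setOf_posSemidef.preimage (by fun_prop))
  · have h : Filter.Tendsto (fun t : ℝ => V + t • (1 - Z)) (nhdsWithin 0 (Set.Ioi 0)) (nhds V) := by
      have hc : Continuous fun t : ℝ => V + t • (1 - Z) := by fun_prop
      exact tendsto_nhdsWithin_of_tendsto_nhds (hc.tendsto' 0 V (by simp))
    exact mem_closure_of_tendsto h (eventually_nhdsWithin_of_forall fun t ht =>
      add_smul_one_sub_mem_dirMat_PSDCone hZ hV hN ht)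

theorem tanMat_PSDCone (hZ : IsStarProjection Z) :
    tanMat Z (PSDCone n) = {V | V.IsHermitian ∧ (1 - Z) * V * (1 - Z) = 0} := by
  ext V
  simp only [tanMat, closure_dirMat_PSDCone hZ, Set.mem_ofPred_eq, mul_neg, neg_mul]
  constructor
  · rintro ⟨⟨hV, hN⟩, -, hN'⟩
    exact ⟨hV, hN.eq_zero_of_neg hN'⟩
  · rintro ⟨hV, h0⟩
    exact ⟨⟨hV, h0 ▸ PosSemidef.zero⟩, hV.neg, by rw [h0, neg_zero]; exact PosSemidef.zero⟩

theorem ldirMat_PSDCone (hZ : IsStarProjection Z) :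
    ldirMat Z (PSDCone n) = {V | V.IsHermitian ∧ (1 - Z) * V = 0} := by
  ext V
  simp only [ldirMat, mem_dirMat_PSDCone_iff hZ, Set.mem_ofPred_eq, mul_neg, neg_mul]
  constructor
  · rintro ⟨⟨hV, hN, F, hF⟩, -, hN', -⟩
    have h0 := hN.eq_zero_of_neg hN'
    rw [h0, zero_mul, zero_mul] at hF
    refine ⟨hV, ?_⟩
    calc (1 - Z) * V = (1 - Z) * V * Z + (1 - Z) * V * (1 - Z) := by
          rw [← mul_add, add_sub_cancel, mul_one]
      _ = 0 := by rw [hF, h0, add_zero]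
  · rintro ⟨hV, h0⟩
    refine ⟨⟨hV, ?_, 0, ?_⟩, hV.neg, ?_, 0, ?_⟩ <;> simp [h0, PosSemidef.zero]

end StarProjection

section ZMat

variable {n r : ℕ}

theorem ZMat_eq_diagonal :
    ZMat n r = diagonal fun i : Fin n => if (i : ℕ) < r then (1 : ℝ) else 0 := by
  ext i j
  by_cases h : i = j <;> simp [ZMat, diagonal, h]

theorem one_sub_ZMat_eq_diagonal :
    1 - ZMat n r = diagonal fun i : Fin n => if (i : ℕ) < r then (0 : ℝ) else 1 := by
  rw [ZMat_eq_diagonal, ← diagonal_one, diagonal_sub]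
  congr 1
  ext i
  split_ifs <;> norm_num

theorem isStarProjection_ZMat : IsStarProjection (ZMat n r) := by
  rw [ZMat_eq_diagonal]
  refine ⟨?_, isHermitian_diagonal _⟩
  rw [IsIdempotentElem, diagonal_mul_diagonal]
  congr 1
  ext i
  split_ifs <;> norm_num

theorem one_sub_ZMat_mulVec_eq_self_iff {x : Fin n → ℝ} :
    (1 - ZMat n r) *ᵥ x = x ↔ ∀ i : Fin n, (i : ℕ) < r → x i = 0 := by
  simp only [one_sub_ZMat_eq_diagonal, mulVec_diagonal, funext_iff]
  refine forall_congr' fun i => ?_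
  split_ifs with h <;> simp [h, eq_comm]

theorem one_sub_ZMat_mul_mul_eq_zero_iff {V : Matrix (Fin n) (Fin n) ℝ} :
    (1 - ZMat n r) * V * (1 - ZMat n r) = 0 ↔
      ∀ i j : Fin n, r ≤ (i : ℕ) → r ≤ (j : ℕ) → V i j = 0 := by
  simp only [one_sub_ZMat_eq_diagonal, ← Matrix.ext_iff, diagonal_mul, mul_diagonal,
    Matrix.zero_apply]
  refine forall₂_congr fun i j => ?_
  simp only [← not_lt]
  split_ifs <;> simp [*]

theorem one_sub_ZMat_mul_eq_zero_iff {V : Matrix (Fin n) (Fin n) ℝ} :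
    (1 - ZMat n r) * V = 0 ↔ ∀ i j : Fin n, r ≤ (i : ℕ) → V i j = 0 := by
  simp only [one_sub_ZMat_eq_diagonal, ← Matrix.ext_iff, diagonal_mul, Matrix.zero_apply, ← not_lt]
  refine forall₂_congr fun i j => ?_
  split_ifs <;> simp [*]

theorem exists_one_sub_ZMat_mul_eq_iff {V : Matrix (Fin n) (Fin n) ℝ} (hV : V.IsSymm) :
    (∃ F, (1 - ZMat n r) * V * ZMat n r = (1 - ZMat n r) * V * (1 - ZMat n r) * F * ZMat n r) ↔
      ∀ i : Fin n, (i : ℕ) < r →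
        ∃ d : Fin n → ℝ, (∀ k : Fin n, (k : ℕ) < r → d k = 0) ∧
          ∀ j : Fin n, r ≤ (j : ℕ) → V i j = ∑ k, V j k * d k := by
  have hassoc (F : Matrix (Fin n) (Fin n) ℝ) : (1 - ZMat n r) * V * (1 - ZMat n r) * F * ZMat n r =
      (1 - ZMat n r) * (V * ((1 - ZMat n r) * F)) * ZMat n r := by
    simp only [Matrix.mul_assoc]
  simp only [hassoc]
  rw [one_sub_ZMat_eq_diagonal, ZMat_eq_diagonal]
  simp only [← Matrix.ext_iff, diagonal_mul, mul_diagonal]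
  simp only [mul_apply, diagonal_apply, ite_mul, zero_mul, Finset.sum_ite_eq, Finset.mem_univ,
    if_true]
  constructor
  · rintro ⟨F, hF⟩ i hi
    refine ⟨fun k => if (k : ℕ) < r then 0 else F k i, fun k hk => if_pos hk, fun j hj => ?_⟩
    have h := hF j i
    simp only [hi, not_lt.mpr hj, if_true, if_false, one_mul, mul_one] at h
    rw [← hV.apply i j, h]
  · intro h
    choose! d hd0 hd using h
    refine ⟨of fun k i => d i k, fun j i => ?_⟩
    by_cases hj : (j : ℕ) < r
    · simp only [hj, if_true]
    by_cases hi : (i : ℕ) < r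
    · simp only [hj, hi, if_true, if_false, one_mul, mul_one, of_apply]
      rw [hV.apply, hd i hi j (not_lt.mp hj)]
      refine Finset.sum_congr rfl fun k _ => ?_
      split_ifs with hk <;> simp [hk, hd0 i hi k]
    · simp only [hj, hi, if_false, mul_zero]

theorem bottomBlockPSD_iff {V : Matrix (Fin n) (Fin n) ℝ} (hV : V.IsSymm) :
    BottomBlockPSD r V ↔ ((1 - ZMat n r) * V * (1 - ZMat n r)).PosSemidef := by
  simp only [BottomBlockPSD,
    isStarProjection_ZMat.one_sub.posSemidef_mul_mul_iff (isHermitian_iff_isSymm.mpr hV),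
    one_sub_ZMat_mulVec_eq_self_iff]

end ZMat

/-- description of `ldir`, `cl dir`, `tan` and `dir` of the positive
semidefinite cone at `Z = I_r ⊕ 0`, with `Y` partitioned into blocks of sizes `r` and
`n - r`: `ldir = {Y : Y₁₂ = 0, Y₂₂ = 0}`, `cl dir = {Y : Y₂₂ ⪰ 0}`, `tan = {Y : Y₂₂ = 0}`,
`dir = {Y : Y₂₂ ⪰ 0, R(Y₁₂ᵀ) ⊆ R(Y₂₂)}` (all within the space `S^n` of symmetric
matrices). -/
theorem psd_dir_sets {n r : ℕ} :
    ldirMat (ZMat n r) (PSDCone n) =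
      {Y : Matrix (Fin n) (Fin n) ℝ | Y.IsSymm ∧
        ∀ i j : Fin n, (r ≤ (i : ℕ) ∨ r ≤ (j : ℕ)) → Y i j = 0} ∧
    closure (dirMat (ZMat n r) (PSDCone n)) =
      {Y : Matrix (Fin n) (Fin n) ℝ | Y.IsSymm ∧ BottomBlockPSD r Y} ∧
    tanMat (ZMat n r) (PSDCone n) =
      {Y : Matrix (Fin n) (Fin n) ℝ | Y.IsSymm ∧
        ∀ i j : Fin n, r ≤ (i : ℕ) → r ≤ (j : ℕ) → Y i j = 0} ∧
    dirMat (ZMat n r) (PSDCone n) =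
      {Y : Matrix (Fin n) (Fin n) ℝ | Y.IsSymm ∧ BottomBlockPSD r Y ∧
        ∀ i : Fin n, (i : ℕ) < r →
          ∃ d : Fin n → ℝ, (∀ k : Fin n, (k : ℕ) < r → d k = 0) ∧
            ∀ j : Fin n, r ≤ (j : ℕ) → Y i j = ∑ k, Y j k * d k} := by
  have hZ : IsStarProjection (ZMat n r) := isStarProjection_ZMat
  refine ⟨?_, ?_, ?_, ?_⟩ <;> ext Y
  · rw [ldirMat_PSDCone hZ]
    simp only [Set.mem_ofPred_eq, isHermitian_iff_isSymm, one_sub_ZMat_mul_eq_zero_iff]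
    exact and_congr_right fun hY => ⟨fun h i j hij => hij.elim (h i j) fun hj =>
      hY.apply i j ▸ h j i hj, fun h i j hi => h i j (Or.inl hi)⟩
  · rw [closure_dirMat_PSDCone hZ]
    simp only [Set.mem_ofPred_eq, isHermitian_iff_isSymm]
    exact and_congr_right fun hY => (bottomBlockPSD_iff hY).symm
  · rw [tanMat_PSDCone hZ]
    simp only [Set.mem_ofPred_eq, isHermitian_iff_isSymm, one_sub_ZMat_mul_mul_eq_zero_iff]
  · rw [Set.mem_ofPred_eq, mem_dirMat_PSDCone_iff hZ, isHermitian_iff_isSymm]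
    exact and_congr_right fun hY => by
      rw [bottomBlockPSD_iff hY, exists_one_sub_ZMat_mul_eq_iff hY]
end
end

section
/- Let C = Q^m be the second order cone in ℝ^m and w = (1, 1, 0, …, 0) ∈ C. Then cl dir(w, C) = {v ∈ ℝ^m : v₁ ≥ v₂}, and cl dir(w, C) \ dir(w, C) = {v ∈ ℝ^m : v₁ = v₂ and (v₃, …, v_m) ≠ 0}. -/
/-!
Write `a = v₁`, `b = v₂` and `s = v₃² + ⋯ + v_m²`. Then `w + ε v ∈ Q^m` iff `1 + ε a ≥ 0` and
`(1 + ε b)² + ε² s ≤ (1 + ε a)²`, i.e. `ε (2 (b - a) + ε (b² + s - a²)) ≤ 0`. Some `ε > 0` satisfies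
this exactly when `b < a`, or `b = a` and `s = 0` (when `b > a`, `0 ≤ 1 + ε a < 1 + ε b` rules it
out). So `dir(w, Q^m)` lies between the open half-space `{v₂ < v₁}` and its closure `{v₂ ≤ v₁}`,
and the directions it misses in that closure are those with `v₁ = v₂` and `s ≠ 0`.
-/

noncomputable section

/-- Membership in the second order cone `Q^m = {x : x₁ ≥ √(x₂² + ⋯ + x_m²)}` (components
indexed from `0`). -/
def SOCMem {m : ℕ} (x : Fin m → ℝ) : Prop :=
  ∀ k : Fin m, (k : ℕ) = 0 →
    Real.sqrt (∑ l ∈ Finset.univ.filter (fun l : Fin m => (l : ℕ) ≠ 0), x l ^ 2) ≤ x k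

/-- The set of feasible directions at `x` in `C ⊆ ℝ^m`. -/
def dirVec {m : ℕ} (x : Fin m → ℝ) (C : Set (Fin m → ℝ)) : Set (Fin m → ℝ) :=
  {v | ∃ ε : ℝ, 0 < ε ∧ x + ε • v ∈ C}

open Filter Topology

section SecondOrderCone

variable {m : ℕ}

def tailNormSq (x : Fin m → ℝ) : ℝ :=
  ∑ l ∈ Finset.univ.filter (fun l : Fin m => 2 ≤ (l : ℕ)), x l ^ 2

lemma tailNormSq_nonneg (x : Fin m → ℝ) : 0 ≤ tailNormSq x :=
  Finset.sum_nonneg fun _ _ => sq_nonneg _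

lemma tailNormSq_eq_zero_iff (x : Fin m → ℝ) :
    tailNormSq x = 0 ↔ ∀ k : Fin m, 2 ≤ (k : ℕ) → x k = 0 := by
  simp [tailNormSq, Finset.sum_eq_zero_iff_of_nonneg fun _ _ => sq_nonneg _]

lemma tailNormSq_add_smul {w : Fin m → ℝ} (hw : ∀ k : Fin m, 2 ≤ (k : ℕ) → w k = 0)
    (ε : ℝ) (v : Fin m → ℝ) : tailNormSq (w + ε • v) = ε ^ 2 * tailNormSq v := by
  rw [tailNormSq, tailNormSq, Finset.mul_sum]
  refine Finset.sum_congr rfl fun l hl => ?_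
  rw [Pi.add_apply, hw l (Finset.mem_filter.mp hl).2, Pi.smul_apply, smul_eq_mul]
  ring

lemma sum_sq_filter_ne_zero_eq (hm : 1 < m) (x : Fin m → ℝ) :
    ∑ l ∈ Finset.univ.filter (fun l : Fin m => (l : ℕ) ≠ 0), x l ^ 2 =
      x ⟨1, hm⟩ ^ 2 + tailNormSq x := by
  have hsplit : Finset.univ.filter (fun l : Fin m => (l : ℕ) ≠ 0) =
      insert ⟨1, hm⟩ (Finset.univ.filter (fun l : Fin m => 2 ≤ (l : ℕ))) := by
    ext l
    simp only [Finset.mem_filter, Finset.mem_univ, true_and, Finset.mem_insert, Fin.ext_iff]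
    omega
  rw [hsplit, Finset.sum_insert (by simp), tailNormSq]

lemma socMem_iff (hm : 1 < m) (x : Fin m → ℝ) :
    SOCMem x ↔ 0 ≤ x ⟨0, Nat.zero_lt_of_lt hm⟩ ∧
      x ⟨1, hm⟩ ^ 2 + tailNormSq x ≤ x ⟨0, Nat.zero_lt_of_lt hm⟩ ^ 2 := by
  have hzero : ∀ k : Fin m, (k : ℕ) = 0 ↔ k = ⟨0, Nat.zero_lt_of_lt hm⟩ := fun k => by
    rw [Fin.ext_iff]
  simp only [SOCMem, hzero, forall_eq, Real.sqrt_le_iff, sum_sq_filter_ne_zero_eq hm]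

lemma exists_pos_sq_add_le_sq_iff {a b s : ℝ} (hs : 0 ≤ s) :
    (∃ ε : ℝ, 0 < ε ∧ 0 ≤ 1 + ε * a ∧ (1 + ε * b) ^ 2 + ε ^ 2 * s ≤ (1 + ε * a) ^ 2) ↔
      b < a ∨ (b = a ∧ s = 0) := by
  constructor
  · rintro ⟨ε, hε, h0, hq⟩
    have hba : b ≤ a := by
      by_contra! hab
      have : 1 + ε * a < 1 + ε * b := by gcongr
      nlinarith [mul_nonneg (sq_nonneg ε) hs]
    rcases hba.lt_or_eq with hlt | rfl
    · exact .inl hlt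
    · exact .inr ⟨rfl, le_antisymm (by nlinarith [pow_pos hε 2]) hs⟩
  · intro h
    have hlin : ∀ᶠ ε in 𝓝 (0 : ℝ), 0 < 1 + ε * a :=
      ((continuous_const.add (continuous_id.mul continuous_const)).tendsto' 0 1
        (by simp)).eventually_const_lt one_pos
    have hquad : ∀ᶠ ε in 𝓝[>] (0 : ℝ), ε * (2 * (b - a) + ε * (b ^ 2 + s - a ^ 2)) ≤ 0 := by
      rcases h with hlt | ⟨rfl, rfl⟩
      · have hneg : ∀ᶠ ε in 𝓝 (0 : ℝ), 2 * (b - a) + ε * (b ^ 2 + s - a ^ 2) < 0 :=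
          ((continuous_const.add (continuous_id.mul continuous_const)).tendsto' 0 (2 * (b - a))
            (by simp)).eventually_lt_const (by linarith)
        filter_upwards [self_mem_nhdsWithin, hneg.filter_mono nhdsWithin_le_nhds] with ε hε hε'
        exact (mul_neg_of_pos_of_neg hε hε').le
      · exact .of_forall fun ε => le_of_eq (by ring)
    obtain ⟨ε, hε, h0, hq⟩ :=
      (eventually_mem_nhdsWithin.and ((hlin.filter_mono nhdsWithin_le_nhds).and hquad)).exists
    exact ⟨ε, hε, h0.le, by linarith⟩

variable {w : Fin m → ℝ}

lemma add_smul_socMem_iff (hm : 1 < m) (hw : ∀ k : Fin m, w k = if (k : ℕ) ≤ 1 then 1 else 0)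
    (ε : ℝ) (v : Fin m → ℝ) :
    SOCMem (w + ε • v) ↔ 0 ≤ 1 + ε * v ⟨0, Nat.zero_lt_of_lt hm⟩ ∧
      (1 + ε * v ⟨1, hm⟩) ^ 2 + ε ^ 2 * tailNormSq v ≤
        (1 + ε * v ⟨0, Nat.zero_lt_of_lt hm⟩) ^ 2 := by
  have hwtail : ∀ k : Fin m, 2 ≤ (k : ℕ) → w k = 0 := fun k hk => by
    rw [hw, if_neg (by omega)]
  simp only [socMem_iff hm, tailNormSq_add_smul hwtail, Pi.add_apply, Pi.smul_apply,
    smul_eq_mul, hw, Nat.zero_le, Nat.le_refl, if_true]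

lemma mem_dirVec_soc_iff (hm : 1 < m) (hw : ∀ k : Fin m, w k = if (k : ℕ) ≤ 1 then 1 else 0)
    (v : Fin m → ℝ) :
    v ∈ dirVec w {x | SOCMem x} ↔ v ⟨1, hm⟩ < v ⟨0, Nat.zero_lt_of_lt hm⟩ ∨
      (v ⟨1, hm⟩ = v ⟨0, Nat.zero_lt_of_lt hm⟩ ∧ ∀ k : Fin m, 2 ≤ (k : ℕ) → v k = 0) := by
  simp only [dirVec, Set.mem_ofPred_eq, add_smul_socMem_iff hm hw,
    exists_pos_sq_add_le_sq_iff (tailNormSq_nonneg v), tailNormSq_eq_zero_iff]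

lemma closure_dirVec_soc (hm : 1 < m) (hw : ∀ k : Fin m, w k = if (k : ℕ) ≤ 1 then 1 else 0) :
    closure (dirVec w {x | SOCMem x}) = {v | v ⟨1, hm⟩ ≤ v ⟨0, Nat.zero_lt_of_lt hm⟩} := by
  refine (closure_minimal (fun v hv => ?_)
    (isClosed_le (continuous_apply (⟨1, hm⟩ : Fin m))
      (continuous_apply (⟨0, Nat.zero_lt_of_lt hm⟩ : Fin m)))).antisymm fun v hv => ?_
  · rcases (mem_dirVec_soc_iff hm hw v).1 hv with h | h
    exacts [h.le, h.1.le]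
  · set e : Fin m → ℝ := Pi.single ⟨0, Nat.zero_lt_of_lt hm⟩ 1
    have hlim : Tendsto (fun t : ℝ => v + t • e) (𝓝[>] 0) (𝓝 v) :=
      ((continuous_const.add (continuous_id.smul continuous_const)).tendsto' 0 v
        (by simp)).mono_left nhdsWithin_le_nhds
    refine mem_closure_of_tendsto hlim (eventually_mem_nhdsWithin.mono fun t ht =>
      (mem_dirVec_soc_iff hm hw _).2 (.inl ?_))
    have hv' : v ⟨1, hm⟩ ≤ v ⟨0, Nat.zero_lt_of_lt hm⟩ := hv
    simp only [e, Pi.add_apply, Pi.smul_apply, smul_eq_mul, ne_eq, Fin.ext_iff, one_ne_zero,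
      not_false_eq_true, Pi.single_eq_of_ne, Pi.single_eq_same, mul_zero, mul_one, add_zero]
    linarith [Set.mem_Ioi.mp ht]

end SecondOrderCone

/-- for the second order cone `C = Q^m` and `w = (1, 1, 0, …, 0)`,
`cl dir(w, C) = {v : v₁ ≥ v₂}` and
`cl dir(w, C) \ dir(w, C) = {v : v₁ = v₂ and (v₃, …, v_m) ≠ 0}`. -/
theorem soc_dir_at_boundary_point {m : ℕ} (hm : 2 ≤ m)
    (w : Fin m → ℝ) (hw : ∀ k : Fin m, w k = if (k : ℕ) ≤ 1 then 1 else 0) :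
    closure (dirVec w {x : Fin m → ℝ | SOCMem x}) =
      {v : Fin m → ℝ | v ⟨1, by omega⟩ ≤ v ⟨0, by omega⟩} ∧
    closure (dirVec w {x : Fin m → ℝ | SOCMem x}) \
        dirVec w {x : Fin m → ℝ | SOCMem x} =
      {v : Fin m → ℝ | v ⟨0, by omega⟩ = v ⟨1, by omega⟩ ∧
        ∃ k : Fin m, 2 ≤ (k : ℕ) ∧ v k ≠ 0} := by
  refine ⟨closure_dirVec_soc hm hw, ?_⟩
  ext v
  simp only [closure_dirVec_soc hm hw, Set.mem_sdiff, Set.mem_ofPred_eq, mem_dirVec_soc_iff hm hw]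
  constructor
  · rintro ⟨hle, hnot⟩
    push Not at hnot
    have heq := le_antisymm hle hnot.1
    exact ⟨heq.symm, hnot.2 heq⟩
  · rintro ⟨heq, k, hk, hvk⟩
    refine ⟨heq.ge, ?_⟩
    rintro (hlt | ⟨-, hzero⟩)
    exacts [hlt.ne heq.symm, hvk (hzero k hk)]
end
end
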